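/- arXiv:1207.5469 — 8 statements merged into one kernel-verified Lean document; each statement's English description precedes it below -/
import Mathlib

section
/- In the incidence graph of a finite projective plane, if a line ℓ contains at least two points of a vertex subset S, then ℓ is resolved by S (i.e., its distance list to S differs from that of any other vertex). -/
open Configuration

variable (P L : Type*) [Membership P L]

/-- The incidence graph of an incidence structure: vertices are points and lines,
with a point adjacent to a line iff it lies on it. -/
def incGraph : SimpleGraph (P ⊕ L) where
  Adj x y := match x, y with
    | .inl p, .inr l => p ∈ l
    | .inr l, .inl p => p ∈ l
    | _, _ => False
  symm := ⟨by rintro (p | l) (p' | l') h <;> simp_all⟩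
  loopless := ⟨by rintro (p | l) h <;> simp_all⟩

/-- A set of vertices is resolving if the ordered distance lists to its elements
distinguish all vertices. -/
def IsResolvingSet (S : Set (P ⊕ L)) : Prop :=
  ∀ x y : P ⊕ L, (∀ s ∈ S, (incGraph P L).dist x s = (incGraph P L).dist y s) → x = y

/-- A vertex `x` is resolved by `S` if no other vertex has the same distance list. -/
def ResolvedBy (S : Set (P ⊕ L)) (x : P ⊕ L) : Prop :=
  ∀ y : P ⊕ L, (∀ s ∈ S, (incGraph P L).dist x s = (incGraph P L).dist y s) → y = x

/-- The metric dimension: the least size of a resolving set. -/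
noncomputable def metricDim : ℕ :=
  sInf {n | ∃ S : Finset (P ⊕ L), S.card = n ∧ IsResolvingSet P L ↑S}

namespace incGraph

variable {P L : Type*} [Membership P L]

lemma exists_eq_inr_of_adj_inl {y : P ⊕ L} {p : P} (h : (incGraph P L).Adj y (.inl p)) :
    ∃ l : L, y = .inr l ∧ p ∈ l := by
  cases y with
  | inl p' => exact h.elim
  | inr l => exact ⟨l, rfl, h⟩

-- Neighbours of a point are the lines through it, and two distinct points span at most one line.
lemma eq_inr_of_dist_inl_eq_one [Nondegenerate P L] {y : P ⊕ L} {l : L} {p q : P}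
    (hpq : p ≠ q) (hpl : p ∈ l) (hql : q ∈ l)
    (hp : (incGraph P L).dist y (.inl p) = 1) (hq : (incGraph P L).dist y (.inl q) = 1) :
    y = .inr l := by
  obtain ⟨l', rfl, hpl'⟩ := exists_eq_inr_of_adj_inl (SimpleGraph.dist_eq_one_iff_adj.mp hp)
  have hql' : q ∈ l' := SimpleGraph.dist_eq_one_iff_adj.mp hq
  rcases Nondegenerate.eq_or_eq hpl hql hpl' hql' with h | h
  · exact absurd h hpq
  · exact congrArg Sum.inr h.symm

end incGraph

theorem line_with_two_inner_points_is_resolved_general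
    {P L : Type*} [Membership P L] [ProjectivePlane P L]
    (S : Set (P ⊕ L)) (l : L) (p q : P) (hpq : p ≠ q) (hpl : p ∈ l) (hql : q ∈ l)
    (hpS : Sum.inl p ∈ S) (hqS : Sum.inl q ∈ S) :
    ResolvedBy P L S (Sum.inr l) := by
  intro y h
  have hp : (incGraph P L).dist (.inr l) (.inl p) = 1 := SimpleGraph.dist_eq_one_iff_adj.mpr hpl
  have hq : (incGraph P L).dist (.inr l) (.inl q) = 1 := SimpleGraph.dist_eq_one_iff_adj.mpr hql
  exact incGraph.eq_inr_of_dist_inl_eq_one hpq hpl hql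
    ((h _ hpS).symm.trans hp) ((h _ hqS).symm.trans hq)

/-- In the incidence graph of a finite projective plane, a line containing
at least two points of a vertex subset S is resolved by S. -/
theorem line_with_two_inner_points_is_resolved
    {P L : Type*} [Membership P L] [ProjectivePlane P L] [Finite P] [Finite L]
    (S : Set (P ⊕ L)) (l : L) (p q : P) (hpq : p ≠ q) (hpl : p ∈ l) (hql : q ∈ l)
    (hpS : Sum.inl p ∈ S) (hqS : Sum.inl q ∈ S) :
    ResolvedBy P L S (Sum.inr l) :=
  line_with_two_inner_points_is_resolved_general S l p q hpq hpl hql hpS hqS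
end

section
/- A set S = P_S ∪ L_S of points and lines is a resolving set of the incidence graph of a finite projective plane if and only if: (P1) at most one line outside L_S is skew to P_S; (P1') at most one point outside P_S is covered by no line of L_S; (P2) through every point of P_S there is at most one line outside L_S tangent to P_S; (P2') on every line of L_S there is at most one point outside P_S covered by exactly one line of L_S. -/
/-!
In the incidence graph of a projective plane two distinct points, or two distinct lines, are at
distance 2, and a point and a line are at distance 1 or 3 according as they are incident or not.
Hence every vertex of `S` tells points from lines by parity, and two distinct points `p`, `q`
have the same distances to `S` exactly when neither lies in `S` and both lie on the same lines
of `S`. As `p` and `q` share at most one line, these lines are either none (excluded by P1') or a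
single line of `S` on which `p` and `q` are both covered once (excluded by P2'). Lines are
handled by applying the same argument to the dual plane, which turns P1', P2' into P1, P2.
-/

open Configuration

variable (P L : Type*) [Membership P L]

def SeparatesOuterPoints (S : Set (P ⊕ L)) : Prop :=
  ∀ p q : P, Sum.inl p ∉ S → Sum.inl q ∉ S →
    {l : L | Sum.inr l ∈ S ∧ p ∈ l} = {l : L | Sum.inr l ∈ S ∧ q ∈ l} → p = q

theorem Set.eq_singleton_of_ncard_eq_one_of_mem {α : Type*} {s : Set α} {a : α}
    (h : s.ncard = 1) (ha : a ∈ s) : s = {a} := by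
  obtain ⟨b, rfl⟩ := Set.ncard_eq_one.1 h
  rw [Set.mem_singleton_iff.1 ha]

section

variable {P L}

theorem separatesOuterPoints_iff [Nondegenerate P L] (S : Set (P ⊕ L)) :
    SeparatesOuterPoints P L S ↔
      {p : P | Sum.inl p ∉ S ∧ ∀ l : L, Sum.inr l ∈ S → p ∉ l}.Subsingleton ∧
      ∀ l : L, Sum.inr l ∈ S →
        {p : P | Sum.inl p ∉ S ∧ p ∈ l ∧
          {m : L | Sum.inr m ∈ S ∧ p ∈ m}.ncard = 1}.Subsingleton := by
  constructor
  · intro hS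
    refine ⟨fun p ⟨hp, hp₀⟩ q ⟨hq, hq₀⟩ => hS p q hp hq ?_, ?_⟩
    · ext l
      exact and_congr_right fun hl => iff_of_false (hp₀ l hl) (hq₀ l hl)
    · rintro l hl p ⟨hp, hpl, hp₁⟩ q ⟨hq, hql, hq₁⟩
      exact hS p q hp hq <| (Set.eq_singleton_of_ncard_eq_one_of_mem hp₁ ⟨hl, hpl⟩).trans
        (Set.eq_singleton_of_ncard_eq_one_of_mem hq₁ ⟨hl, hql⟩).symm
  · rintro ⟨hP1, hP2⟩ p q hp hq hpq
    by_contra hne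
    set T := {l : L | Sum.inr l ∈ S ∧ p ∈ l}
    have hT : T.Subsingleton := by
      intro l hl m hm
      have hql : q ∈ l := (hpq ▸ hl).2
      have hqm : q ∈ m := (hpq ▸ hm).2
      exact (Nondegenerate.eq_or_eq hl.2 hql hm.2 hqm).resolve_left hne
    rcases hT.eq_empty_or_singleton with hT₀ | ⟨l, hT₁⟩
    · refine hne (hP1 ⟨hp, fun l hl hpl => ?_⟩ ⟨hq, fun l hl hql => ?_⟩)
      · exact (hT₀ ▸ ⟨hl, hpl⟩ : l ∈ (∅ : Set L))
      · exact (hT₀ ▸ hpq ▸ ⟨hl, hql⟩ : l ∈ (∅ : Set L))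
    · have hl : l ∈ T := hT₁ ▸ rfl
      have hql : l ∈ {m : L | Sum.inr m ∈ S ∧ q ∈ m} := hpq ▸ hl
      refine hne (hP2 l hl.1 ⟨hp, hl.2, ?_⟩ ⟨hq, hql.2, ?_⟩)
      · change T.ncard = 1
        rw [hT₁, Set.ncard_singleton]
      · rw [← hpq, hT₁, Set.ncard_singleton]

theorem incGraph_isLeft_ne_of_adj {x y : P ⊕ L} (h : (incGraph P L).Adj x y) :
    x.isLeft ≠ y.isLeft := by
  rcases x with p | l <;> rcases y with q | m <;> simp_all [incGraph]

theorem incGraph_walk_even_length_iff {x y : P ⊕ L} (w : (incGraph P L).Walk x y) :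
    Even w.length ↔ x.isLeft = y.isLeft := by
  induction w with
  | nil => simp
  | cons h w ih =>
    have hside := incGraph_isLeft_ne_of_adj h
    rw [SimpleGraph.Walk.length_cons, Nat.even_add_one, ih]
    revert hside
    cases Sum.isLeft _ <;> cases Sum.isLeft _ <;> cases Sum.isLeft _ <;> simp

theorem incGraph_even_dist_iff {x y : P ⊕ L} (h : (incGraph P L).Reachable x y) :
    Even ((incGraph P L).dist x y) ↔ x.isLeft = y.isLeft := by
  obtain ⟨w, hw⟩ := h.exists_walk_length_eq_dist
  rw [← hw, incGraph_walk_even_length_iff]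

variable [ProjectivePlane P L]

theorem ProjectivePlane.exists_point_mem (l : L) : ∃ p : P, p ∈ l := by
  obtain ⟨-, p, -, -, l₂, -, -, -, -, hp, -⟩ := ProjectivePlane.exists_config (P := P) (L := L)
  by_cases h : l = l₂
  · exact ⟨p, h ▸ hp⟩
  · exact ⟨HasPoints.mkPoint h, (HasPoints.mkPoint_ax h).1⟩

theorem ProjectivePlane.exists_line_mem (p : P) : ∃ l : L, p ∈ l :=
  ProjectivePlane.exists_point_mem (P := Dual L) (L := Dual P) p

theorem incGraph_exists_adj (x : P ⊕ L) : ∃ y, (incGraph P L).Adj x y := by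
  rcases x with p | l
  · obtain ⟨l, hl⟩ := ProjectivePlane.exists_line_mem (L := L) p
    exact ⟨.inr l, hl⟩
  · obtain ⟨p, hp⟩ := ProjectivePlane.exists_point_mem (P := P) l
    exact ⟨.inl p, hp⟩

theorem incGraph_exists_adj_adj {x y : P ⊕ L} (hne : x ≠ y) (hside : x.isLeft = y.isLeft) :
    ∃ z, (incGraph P L).Adj x z ∧ (incGraph P L).Adj z y := by
  rcases x with p | l <;> rcases y with q | m <;> simp only [Sum.isLeft_inl, Sum.isLeft_inr,
    Bool.false_eq_true, Bool.true_eq_false] at hside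
  · have h : p ≠ q := fun h => hne (h ▸ rfl)
    exact ⟨.inr (HasLines.mkLine h), HasLines.mkLine_ax h⟩
  · have h : l ≠ m := fun h => hne (h ▸ rfl)
    exact ⟨.inl (HasPoints.mkPoint h), HasPoints.mkPoint_ax h⟩

open Classical in
theorem incGraph_dist_eq (x y : P ⊕ L) :
    (incGraph P L).dist x y =
      if x = y then 0 else if (incGraph P L).Adj x y then 1
      else if x.isLeft = y.isLeft then 2 else 3 := by
  split_ifs with hxy hadj hside
  · rw [hxy, SimpleGraph.dist_self]
  · exact SimpleGraph.dist_eq_one_iff_adj.2 hadj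
  · obtain ⟨z, hxz, hzy⟩ := incGraph_exists_adj_adj hxy hside
    let w : (incGraph P L).Walk x y := .cons hxz (.cons hzy .nil)
    have hle : (incGraph P L).dist x y ≤ 2 := SimpleGraph.dist_le w
    have hpos := w.reachable.pos_dist_of_ne hxy
    obtain ⟨k, hk⟩ := (incGraph_even_dist_iff w.reachable).2 hside
    omega
  · -- a neighbour `z` of `y` is on the side of `x`, and a common neighbour of `x` and `z`
    -- gives a path of length 3
    obtain ⟨z, hyz⟩ := incGraph_exists_adj y
    have hxz : x ≠ z := fun h => hadj (h ▸ hyz.symm)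
    have hside' : x.isLeft = z.isLeft := by
      have := incGraph_isLeft_ne_of_adj hyz
      revert hside this
      cases x.isLeft <;> cases y.isLeft <;> simp
    obtain ⟨u, hxu, huz⟩ := incGraph_exists_adj_adj hxz hside'
    let w : (incGraph P L).Walk x y := .cons hxu (.cons huz (.cons hyz.symm .nil))
    have hle : (incGraph P L).dist x y ≤ 3 := SimpleGraph.dist_le w
    have hne : (incGraph P L).dist x y ≠ 1 := fun h => hadj (SimpleGraph.dist_eq_one_iff_adj.1 h)
    have hodd := mt (incGraph_even_dist_iff w.reachable).1 hside
    rw [Nat.not_even_iff_odd] at hodd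
    obtain ⟨k, hk⟩ := hodd
    omega

theorem incGraph_preconnected : (incGraph P L).Preconnected := by
  intro x y
  by_cases hxy : x = y
  · exact hxy ▸ SimpleGraph.Reachable.refl x
  · refine SimpleGraph.Reachable.of_dist_ne_zero ?_
    rw [incGraph_dist_eq]
    split_ifs <;> simp

theorem incGraph_dist_eq_dist_iff_of_ne {x y : P ⊕ L} (hne : x ≠ y) (hside : x.isLeft = y.isLeft)
    (S : Set (P ⊕ L)) :
    (∀ s ∈ S, (incGraph P L).dist x s = (incGraph P L).dist y s) ↔
      x ∉ S ∧ y ∉ S ∧ ∀ s ∈ S, ((incGraph P L).Adj x s ↔ (incGraph P L).Adj y s) := by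
  constructor
  · intro h
    refine ⟨fun hx => ?_, fun hy => ?_, fun s hs => ?_⟩
    · have hyx : ¬(incGraph P L).Adj y x := fun h => incGraph_isLeft_ne_of_adj h hside.symm
      have := h x hx
      simp [incGraph_dist_eq, hne.symm, hyx, hside] at this
    · have hxy : ¬(incGraph P L).Adj x y := fun h => incGraph_isLeft_ne_of_adj h hside
      have := h y hy
      simp [incGraph_dist_eq, hne, hxy, hside] at this
    · have := h s hs
      simp only [incGraph_dist_eq] at this
      split_ifs at this <;> simp_all
  · rintro ⟨hx, hy, hadj⟩ s hs
    have hxs : x ≠ s := fun h => hx (h ▸ hs)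
    have hys : y ≠ s := fun h => hy (h ▸ hs)
    rw [incGraph_dist_eq, incGraph_dist_eq, if_neg hxs, if_neg hys, hside]
    classical
    exact if_congr (hadj s hs) rfl rfl

end

theorem ProjectivePlane.nontrivial_points [ProjectivePlane P L] : Nontrivial P := by
  obtain ⟨p, q, -, -, l, -, hp, -, -, hq, -⟩ := ProjectivePlane.exists_config (P := P) (L := L)
  exact ⟨p, q, fun h => hp (h ▸ hq)⟩

section

variable {P L} [ProjectivePlane P L]

theorem isResolvingSet_iff_separatesOuterPoints (S : Set (P ⊕ L)) :
    IsResolvingSet P L S ↔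
      SeparatesOuterPoints P L S ∧ SeparatesOuterPoints (Dual L) (Dual P) (Sum.swap ⁻¹' S) := by
  constructor
  · intro hS
    refine ⟨fun p q hp hq hpq => by_contra fun hne => ?_,
      fun (l m : L) hl hm hlm => by_contra fun hne => ?_⟩
    · refine hne (Sum.inl_injective (hS _ _ <|
        (incGraph_dist_eq_dist_iff_of_ne (Sum.inl_injective.ne hne) rfl S).2 ⟨hp, hq, ?_⟩))
      rintro (r | n) hs
      · exact Iff.rfl
      · exact and_congr_right_iff.1 (Set.ext_iff.1 hpq n) hs
    · have hne' : (Sum.inr l : P ⊕ L) ≠ Sum.inr m := Sum.inr_injective.ne hne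
      refine hne (Sum.inr_injective (hS _ _ <|
        (incGraph_dist_eq_dist_iff_of_ne hne' rfl S).2 ⟨hl, hm, ?_⟩))
      rintro (n | r) hs
      · exact and_congr_right_iff.1 (Set.ext_iff.1 hlm n) hs
      · exact Iff.rfl
  · rintro ⟨hP, hL⟩ x y hxy
    by_contra hne
    obtain ⟨s, hs⟩ : S.Nonempty := by
      by_contra! hS
      obtain ⟨p, q, hpq⟩ := (ProjectivePlane.nontrivial_points P L).exists_pair_ne
      exact hpq (hP p q (by simp [hS]) (by simp [hS]) (by simp [hS]))
    by_cases hside : x.isLeft = y.isLeft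
    · obtain ⟨hx, hy, hadj⟩ := (incGraph_dist_eq_dist_iff_of_ne hne hside S).1 hxy
      rcases x with p | l <;> rcases y with q | m <;> simp only [Sum.isLeft_inl, Sum.isLeft_inr,
        Bool.false_eq_true, Bool.true_eq_false] at hside
      · exact hne (congrArg _ (hP p q hx hy (Set.ext fun n => and_congr_right fun hn => hadj _ hn)))
      · exact hne (congrArg _ (hL l m hx hy (Set.ext fun n => and_congr_right fun hn => hadj _ hn)))
    · -- `s` is at even distance from exactly one of `x`, `y`
      have hx := incGraph_even_dist_iff (incGraph_preconnected x s)
      have hy := incGraph_even_dist_iff (incGraph_preconnected y s)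
      rw [hxy s hs, hy] at hx
      revert hside hx
      cases x.isLeft <;> cases y.isLeft <;> cases s.isLeft <;> simp

end

theorem isResolvingSet_iff_P1_P1'_P2_P2'_general
    {P L : Type*} [Membership P L] [ProjectivePlane P L]
    (S : Set (P ⊕ L)) :
    IsResolvingSet P L S ↔
      -- P1: at most one line outside L_S skew to P_S
      ({l : L | Sum.inr l ∉ S ∧ ∀ p : P, Sum.inl p ∈ S → p ∉ l}).Subsingleton ∧
      -- P1': at most one point outside P_S covered by no line of L_S
      ({p : P | Sum.inl p ∉ S ∧ ∀ l : L, Sum.inr l ∈ S → p ∉ l}).Subsingleton ∧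
      -- P2: through every inner point at most one outer line tangent to P_S
      (∀ p : P, Sum.inl p ∈ S →
        ({l : L | Sum.inr l ∉ S ∧ p ∈ l ∧
          ({x : P | Sum.inl x ∈ S ∧ x ∈ l}).ncard = 1}).Subsingleton) ∧
      -- P2': on every inner line at most one outer point 1-covered by L_S
      (∀ l : L, Sum.inr l ∈ S →
        ({p : P | Sum.inl p ∉ S ∧ p ∈ l ∧
          ({m : L | Sum.inr m ∈ S ∧ p ∈ m}).ncard = 1}).Subsingleton) := by
  -- for the dual plane and `Sum.swap ⁻¹' S`, conditions P1' and P2' unfold to P1 and P2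
  rw [isResolvingSet_iff_separatesOuterPoints, separatesOuterPoints_iff, separatesOuterPoints_iff]
  exact ⟨fun ⟨⟨h1', h2'⟩, h1, h2⟩ => ⟨h1, h1', h2, h2'⟩,
    fun ⟨h1, h1', h2, h2'⟩ => ⟨⟨h1', h2'⟩, h1, h2⟩⟩

/-- characterization of resolving sets of a finite projective plane by the
properties P1, P1', P2, P2'. -/
theorem isResolvingSet_iff_P1_P1'_P2_P2'
    {P L : Type*} [Membership P L] [ProjectivePlane P L] [Finite P] [Finite L]
    (S : Set (P ⊕ L)) :
    IsResolvingSet P L S ↔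
      -- P1: at most one line outside L_S skew to P_S
      ({l : L | Sum.inr l ∉ S ∧ ∀ p : P, Sum.inl p ∈ S → p ∉ l}).Subsingleton ∧
      -- P1': at most one point outside P_S covered by no line of L_S
      ({p : P | Sum.inl p ∉ S ∧ ∀ l : L, Sum.inr l ∈ S → p ∉ l}).Subsingleton ∧
      -- P2: through every inner point at most one outer line tangent to P_S
      (∀ p : P, Sum.inl p ∈ S →
        ({l : L | Sum.inr l ∉ S ∧ p ∈ l ∧
          ({x : P | Sum.inl x ∈ S ∧ x ∈ l}).ncard = 1}).Subsingleton) ∧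
      -- P2': on every inner line at most one outer point 1-covered by L_S
      (∀ l : L, Sum.inr l ∈ S →
        ({p : P | Sum.inl p ∉ S ∧ p ∈ l ∧
          ({m : L | Sum.inr m ∈ S ∧ p ∈ m}).ncard = 1}).Subsingleton) :=
  isResolvingSet_iff_P1_P1'_P2_P2'_general S
end

section
/- The metric dimension of the incidence graph of any projective plane of order q ≥ 3 is at most 4q − 4. -/
open Configuration

variable (P L : Type*) [Membership P L]

/-!
Let `a, b` be lines meeting in `t`, let `u ∈ a` and `v ∈ b` be points other than `t`, and let
`c ≠ a` be a line through `u` missing `v`. The resolving set consists of the `2q - 2` points of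
`a ∪ b` other than `t, u, v` and the `2q - 2` lines through `t` or `u` other than `a, b, c`.

In the (connected, bipartite) incidence graph, any vertex of the set separates points from lines
by the parity of the distance, every vertex of the set is separated from all others by distance
`0`, and a line of the set is at distance `1` from exactly the points on it. So it suffices that
two points outside the set are separated by a line of the set, and dually. A point outside the
set lies on at least two lines of the set (for `t` and `u` this needs `q ≥ 3`), unless it is `v`
or lies on `c`; the few remaining coincidences contradict the incidences of the frame. The frame
is self-dual under `(a, b, t, u, v, c) ↦ (t, u, a, b, c, v)`, which turns the separation of
points into the separation of lines.
-/

section IncidenceGraph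

variable {P L}

theorem incGraph_adj_inl_inr {p : P} {l : L} :
    (incGraph P L).Adj (.inl p) (.inr l) ↔ p ∈ l := Iff.rfl

theorem incGraph_adj_inr_inl {p : P} {l : L} :
    (incGraph P L).Adj (.inr l) (.inl p) ↔ p ∈ l := Iff.rfl

def incGraphSideColoring : (incGraph P L).Coloring Bool :=
  SimpleGraph.Coloring.mk Sum.isLeft (by rintro (p | l) (p' | l') h <;> simp_all [incGraph])

theorem even_dist_incGraph_iff (hconn : (incGraph P L).Connected) (x y : P ⊕ L) :
    Even ((incGraph P L).dist x y) ↔ x.isLeft = y.isLeft := by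
  obtain ⟨w, hw⟩ := hconn.exists_walk_length_eq_dist x y
  rw [← hw, incGraphSideColoring.even_length_iff_congr w]
  exact Bool.eq_iff_iff.symm

theorem dist_incGraph_inl_ne_inr (hconn : (incGraph P L).Connected) (p : P) (l : L)
    (s : P ⊕ L) : (incGraph P L).dist (.inl p) s ≠ (incGraph P L).dist (.inr l) s := by
  intro h
  have h' := even_dist_incGraph_iff hconn (.inl p) s
  rw [h, even_dist_incGraph_iff hconn] at h'
  cases s <;> simp at h'

theorem connected_incGraph [ProjectivePlane P L] : (incGraph P L).Connected := by
  have points_reachable : ∀ p p' : P, (incGraph P L).Reachable (.inl p) (.inl p') := by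
    intro p p'
    by_cases h : p = p'
    · exact h ▸ .rfl
    · have hl := HasLines.mkLine_ax (L := L) h
      exact (incGraph_adj_inl_inr.mpr hl.1).reachable.trans
        (incGraph_adj_inr_inl.mpr hl.2).reachable
  have line_reachable (l : L) : ∃ p : P, (incGraph P L).Reachable (.inl p) (.inr l) := by
    obtain ⟨-, -, p, -, m, -, -, -, -, -, -, -, hpm, -⟩ :=
      ProjectivePlane.exists_config (P := P) (L := L)
    by_cases h : l = m
    · exact ⟨p, (incGraph_adj_inl_inr.mpr (h ▸ hpm)).reachable⟩
    · exact ⟨_, (incGraph_adj_inl_inr.mpr (HasPoints.mkPoint_ax (P := P) h).1).reachable⟩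
  obtain ⟨p, -⟩ := ProjectivePlane.exists_config (P := P) (L := L)
  refine (SimpleGraph.connected_iff_exists_forall_reachable _).mpr ⟨.inl p, ?_⟩
  rintro (p' | l)
  · exact points_reachable p p'
  · obtain ⟨q, hq⟩ := line_reachable l
    exact (points_reachable p q).trans hq

theorem isResolvingSet_of_separating (hconn : (incGraph P L).Connected) {SP : Set P}
    {SL : Set L} (hSP : SP.Nonempty)
    (hP : ∀ ⦃p p' : P⦄, p ∉ SP → p' ∉ SP → p ≠ p' → ∃ l ∈ SL, ¬(p ∈ l ↔ p' ∈ l))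
    (hL : ∀ ⦃l l' : L⦄, l ∉ SL → l' ∉ SL → l ≠ l' → ∃ p ∈ SP, ¬(p ∈ l ↔ p ∈ l')) :
    IsResolvingSet P L (Sum.inl '' SP ∪ Sum.inr '' SL) := by
  intro x y hxy
  have of_left_mem : x ∈ Sum.inl '' SP ∪ Sum.inr '' SL → x = y := fun hx =>
    (hconn.dist_eq_zero_iff.mp ((hxy x hx).symm.trans SimpleGraph.dist_self)).symm
  have of_right_mem : y ∈ Sum.inl '' SP ∪ Sum.inr '' SL → x = y := fun hy =>
    hconn.dist_eq_zero_iff.mp ((hxy y hy).trans SimpleGraph.dist_self)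
  have adj_iff {s} (hs : s ∈ Sum.inl '' SP ∪ Sum.inr '' SL) :
      (incGraph P L).Adj x s ↔ (incGraph P L).Adj y s := by
    rw [← SimpleGraph.dist_eq_one_iff_adj, ← SimpleGraph.dist_eq_one_iff_adj, hxy s hs]
  obtain ⟨s, hs⟩ := hSP
  rcases x with p | l <;> rcases y with p' | l'
  · by_contra hne
    obtain ⟨l, hl, hsep⟩ := hP (fun hp => hne (of_left_mem (.inl ⟨p, hp, rfl⟩)))
      (fun hp' => hne (of_right_mem (.inl ⟨p', hp', rfl⟩))) (fun h => hne (h ▸ rfl))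
    exact hsep (adj_iff (.inr ⟨l, hl, rfl⟩))
  · exact absurd (hxy _ (.inl ⟨s, hs, rfl⟩)) (dist_incGraph_inl_ne_inr hconn p l' _)
  · exact absurd (hxy _ (.inl ⟨s, hs, rfl⟩)).symm (dist_incGraph_inl_ne_inr hconn p' l _)
  · by_contra hne
    obtain ⟨p, hp, hsep⟩ := hL (fun hl => hne (of_left_mem (.inr ⟨l, hl, rfl⟩)))
      (fun hl' => hne (of_right_mem (.inr ⟨l', hl', rfl⟩))) (fun h => hne (h ▸ rfl))
    exact hsep (adj_iff (.inl ⟨p, hp, rfl⟩))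

theorem metricDim_le_ncard [Finite P] [Finite L] {S : Set (P ⊕ L)}
    (hS : IsResolvingSet P L S) : metricDim P L ≤ S.ncard := by
  refine Nat.sInf_le ⟨S.toFinite.toFinset, ?_, ?_⟩
  · exact (Set.ncard_eq_toFinset_card S).symm
  · rwa [Set.Finite.coe_toFinset]

end IncidenceGraph

namespace Configuration.ProjectivePlane

variable {P L} [ProjectivePlane P L] [Finite P] [Finite L]

theorem ncard_setOf_mem (l : L) : {p : P | p ∈ l}.ncard = order P L + 1 :=
  pointCount_eq P l

theorem order_sub_one_le_ncard_setOf_mem_diff (l : L) (p₁ p₂ : P) :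
    order P L - 1 ≤ ({p | p ∈ l} \ {p₁, p₂}).ncard := by
  have hpair : ({p₁, p₂} : Set P).ncard ≤ 2 :=
    (Set.ncard_insert_le _ _).trans (by rw [Set.ncard_singleton])
  have := Set.le_ncard_sdiff {p₁, p₂} {p | p ∈ l}
  rw [ncard_setOf_mem] at this
  omega

theorem order_sub_one_le_ncard_lines_through_diff (p : P) (l₁ l₂ : L) :
    order P L - 1 ≤ ({l | p ∈ l} \ {l₁, l₂}).ncard :=
  Dual.order P L ▸ order_sub_one_le_ncard_setOf_mem_diff (P := Dual L) (L := Dual P) p l₁ l₂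

theorem ncard_setOf_mem_diff_pair {l : L} {p₁ p₂ : P} (h₁ : p₁ ∈ l) (h₂ : p₂ ∈ l)
    (hne : p₁ ≠ p₂) : ({p | p ∈ l} \ {p₁, p₂}).ncard = order P L - 1 := by
  have hsub : ({p₁, p₂} : Set P) ⊆ {p | p ∈ l} := Set.pair_subset h₁ h₂
  rw [Set.ncard_sdiff hsub, ncard_setOf_mem, Set.ncard_pair hne]
  omega

theorem exists_point_on_ne_ne (l : L) (p₁ p₂ : P) : ∃ p, p ∈ l ∧ p ≠ p₁ ∧ p ≠ p₂ := by
  have h₁ := one_lt_order P L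
  have h₂ := order_sub_one_le_ncard_setOf_mem_diff l p₁ p₂
  obtain ⟨p, hpl, hp⟩ : ({p | p ∈ l} \ {p₁, p₂}).Nonempty :=
    Set.nonempty_of_ncard_ne_zero (by omega)
  simp only [Set.mem_insert_iff, Set.mem_singleton_iff, not_or] at hp
  exact ⟨p, hpl, hp⟩

theorem exists_line_through_ne_ne (p : P) (l₁ l₂ : L) : ∃ l, p ∈ l ∧ l ≠ l₁ ∧ l ≠ l₂ :=
  exists_point_on_ne_ne (P := Dual L) (L := Dual P) p l₁ l₂

theorem exists_two_lines_through_ne_ne (hq : 3 ≤ order P L) (p : P) (l₁ l₂ : L) :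
    ∃ m₁ m₂ : L, (p ∈ m₁ ∧ m₁ ≠ l₁ ∧ m₁ ≠ l₂) ∧ (p ∈ m₂ ∧ m₂ ≠ l₁ ∧ m₂ ≠ l₂) ∧ m₁ ≠ m₂ := by
  obtain ⟨m₁, m₂, h₁, h₂, hne⟩ := (Set.one_lt_ncard_iff).mp
    (lt_of_lt_of_le (by omega) (order_sub_one_le_ncard_lines_through_diff p l₁ l₂))
  simp only [Set.mem_sdiff, Set.mem_ofPred_eq, Set.mem_insert_iff, Set.mem_singleton_iff,
    not_or] at h₁ h₂
  exact ⟨m₁, m₂, h₁, h₂, hne⟩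

end Configuration.ProjectivePlane

structure ResolvingFrame where
  a : L
  b : L
  t : P
  u : P
  v : P
  c : L
  t_mem_a : t ∈ a
  t_mem_b : t ∈ b
  a_ne_b : a ≠ b
  u_mem_a : u ∈ a
  u_ne_t : u ≠ t
  v_mem_b : v ∈ b
  v_ne_t : v ≠ t
  u_mem_c : u ∈ c
  c_ne_a : c ≠ a
  v_not_mem_c : v ∉ c

namespace ResolvingFrame

variable {P L} (F : ResolvingFrame P L)

def points : Set P := {p | (p ∈ F.a ∨ p ∈ F.b) ∧ p ≠ F.t ∧ p ≠ F.u ∧ p ≠ F.v}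

def lines : Set L := {l | (F.t ∈ l ∨ F.u ∈ l) ∧ l ≠ F.a ∧ l ≠ F.b ∧ l ≠ F.c}

def vertices : Set (P ⊕ L) := Sum.inl '' F.points ∪ Sum.inr '' F.lines

def dual : ResolvingFrame (Dual L) (Dual P) where
  a := F.t
  b := F.u
  t := F.a
  u := F.b
  v := F.c
  c := F.v
  t_mem_a := F.t_mem_a
  t_mem_b := F.u_mem_a
  a_ne_b := F.u_ne_t.symm
  u_mem_a := F.t_mem_b
  u_ne_t := F.a_ne_b.symm
  v_mem_b := F.u_mem_c
  v_ne_t := F.c_ne_a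
  u_mem_c := F.v_mem_b
  c_ne_a := F.v_ne_t
  v_not_mem_c := F.v_not_mem_c

section Nondegenerate

variable [Nondegenerate P L]

theorem v_not_mem_a : F.v ∉ F.a := fun h =>
  F.v_ne_t ((Nondegenerate.eq_or_eq h F.t_mem_a F.v_mem_b F.t_mem_b).resolve_right F.a_ne_b)

theorem u_not_mem_b : F.u ∉ F.b := fun h =>
  F.u_ne_t ((Nondegenerate.eq_or_eq F.u_mem_a F.t_mem_a h F.t_mem_b).resolve_right F.a_ne_b)

theorem t_not_mem_c : F.t ∉ F.c := F.dual.v_not_mem_a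

theorem eq_a_of_t_mem_of_u_mem {l : L} (ht : F.t ∈ l) (hu : F.u ∈ l) : l = F.a :=
  (Nondegenerate.eq_or_eq ht hu F.t_mem_a F.u_mem_a).resolve_left F.u_ne_t.symm

theorem mem_lines_of_t_mem {l : L} (ht : F.t ∈ l) (ha : l ≠ F.a) (hb : l ≠ F.b) :
    l ∈ F.lines :=
  ⟨.inl ht, ha, hb, fun h => F.t_not_mem_c (h ▸ ht)⟩

theorem mem_lines_of_u_mem {l : L} (hu : F.u ∈ l) (ha : l ≠ F.a) (hc : l ≠ F.c) :
    l ∈ F.lines :=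
  ⟨.inr hu, ha, fun h => F.u_not_mem_b (h ▸ hu), hc⟩

end Nondegenerate

section ProjectivePlane

open ProjectivePlane

variable [ProjectivePlane P L] [Finite P] [Finite L]

theorem nonempty : Nonempty (ResolvingFrame P L) := by
  obtain ⟨-, -, p, -, a, b, -, -, -, -, -, -, hpa, hpb⟩ := exists_config (P := P) (L := L)
  have hab : a ≠ b := fun h => hpb (h ▸ hpa)
  obtain ⟨t, hta, htb⟩ : ∃ t : P, t ∈ a ∧ t ∈ b := ⟨_, HasPoints.mkPoint_ax hab⟩
  obtain ⟨u, hua, hut, -⟩ := exists_point_on_ne_ne a t t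
  obtain ⟨v, hvb, hvt, -⟩ := exists_point_on_ne_ne b t t
  have huv : u ≠ v := fun h =>
    hut ((Nondegenerate.eq_or_eq hua hta (h ▸ hvb) htb).resolve_right hab)
  obtain ⟨w, huw, hvw⟩ : ∃ w : L, u ∈ w ∧ v ∈ w := ⟨_, HasLines.mkLine_ax huv⟩
  obtain ⟨c, huc, hca, hcw⟩ := exists_line_through_ne_ne u a w
  exact ⟨{ a, b, t, u, v, c
           t_mem_a := hta
           t_mem_b := htb
           a_ne_b := hab
           u_mem_a := hua
           u_ne_t := hut
           v_mem_b := hvb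
           v_ne_t := hvt
           u_mem_c := huc
           c_ne_a := hca
           v_not_mem_c := fun hvc =>
             hcw ((Nondegenerate.eq_or_eq huc hvc huw hvw).resolve_left huv) }⟩

theorem eq_v_or_mem_c_of_lines_through_eq (hq : 3 ≤ order P L) {x : P} {m : L}
    (hx : x ∉ F.points) (hm : ∀ l ∈ F.lines, x ∈ l → l = m) :
    (x = F.v ∧ F.u ∈ m) ∨ (x ∈ F.c ∧ F.t ∈ m) := by
  have not_two_lines_through {l₁ l₂ : L} (h₁ : l₁ ∈ F.lines) (h₂ : l₂ ∈ F.lines)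
      (hx₁ : x ∈ l₁) (hx₂ : x ∈ l₂) (hne : l₁ ≠ l₂) : False :=
    hne ((hm l₁ h₁ hx₁).trans (hm l₂ h₂ hx₂).symm)
  by_cases hxa : x ∈ F.a
  · exfalso
    have hxtu : x = F.t ∨ x = F.u := by
      by_contra! h
      exact hx ⟨.inl hxa, h.1, h.2, fun e => F.v_not_mem_a (e ▸ hxa)⟩
    rcases hxtu with rfl | rfl
    · obtain ⟨n₁, n₂, ⟨ht₁, ha₁, hb₁⟩, ⟨ht₂, ha₂, hb₂⟩, hne⟩ :=
        exists_two_lines_through_ne_ne hq F.t F.a F.b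
      exact not_two_lines_through (F.mem_lines_of_t_mem ht₁ ha₁ hb₁)
        (F.mem_lines_of_t_mem ht₂ ha₂ hb₂) ht₁ ht₂ hne
    · obtain ⟨n₁, n₂, ⟨hu₁, ha₁, hc₁⟩, ⟨hu₂, ha₂, hc₂⟩, hne⟩ :=
        exists_two_lines_through_ne_ne hq F.u F.a F.c
      exact not_two_lines_through (F.mem_lines_of_u_mem hu₁ ha₁ hc₁)
        (F.mem_lines_of_u_mem hu₂ ha₂ hc₂) hu₁ hu₂ hne
  have hxt : x ≠ F.t := fun e => hxa (e ▸ F.t_mem_a)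
  have hxu : x ≠ F.u := fun e => hxa (e ▸ F.u_mem_a)
  by_cases hxb : x ∈ F.b
  · obtain rfl : x = F.v := by
      by_contra h
      exact hx ⟨.inr hxb, hxt, hxu, h⟩
    obtain ⟨hun, hvn⟩ := HasLines.mkLine_ax (L := L) hxu.symm
    have hn := F.mem_lines_of_u_mem hun (fun e => hxa (e ▸ hvn))
      (fun e => F.v_not_mem_c (e ▸ hvn))
    exact .inl ⟨rfl, hm _ hn hvn ▸ hun⟩
  obtain ⟨hxn, htn⟩ := HasLines.mkLine_ax (L := L) hxt
  have hnm : HasLines.mkLine (L := L) hxt = m :=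
    hm _ (F.mem_lines_of_t_mem htn (fun e => hxa (e ▸ hxn)) (fun e => hxb (e ▸ hxn))) hxn
  have htm : F.t ∈ m := hnm ▸ htn
  by_cases hxc : x ∈ F.c
  · exact .inr ⟨hxc, htm⟩
  · exfalso
    obtain ⟨hxn', hun'⟩ := HasLines.mkLine_ax (L := L) hxu
    have hum : F.u ∈ m :=
      hm _ (F.mem_lines_of_u_mem hun' (fun e => hxa (e ▸ hxn')) (fun e => hxc (e ▸ hxn')))
        hxn' ▸ hun'
    exact hxa (F.eq_a_of_t_mem_of_u_mem htm hum ▸ hnm ▸ hxn)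

theorem exists_mem_lines_not_iff (hq : 3 ≤ order P L) {p p' : P} (hp : p ∉ F.points)
    (hp' : p' ∉ F.points) (hne : p ≠ p') : ∃ l ∈ F.lines, ¬(p ∈ l ↔ p' ∈ l) := by
  by_contra! h
  obtain ⟨hpm, hp'm⟩ := HasLines.mkLine_ax (L := L) hne
  have lines_through {x : P} (hxm : x ∈ HasLines.mkLine (L := L) hne)
      (hx : ∀ l ∈ F.lines, x ∈ l → p ∈ l ∧ p' ∈ l) :
      ∀ l ∈ F.lines, x ∈ l → l = HasLines.mkLine hne := fun l hl hxl =>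
    (Nondegenerate.eq_or_eq (hx l hl hxl).1 (hx l hl hxl).2 hpm hp'm).resolve_left hne
  rcases F.eq_v_or_mem_c_of_lines_through_eq hq hp
      (lines_through hpm fun l hl hpl => ⟨hpl, (h l hl).1 hpl⟩) with
    ⟨rfl, hum⟩ | ⟨hpc, htm⟩ <;>
  rcases F.eq_v_or_mem_c_of_lines_through_eq hq hp'
      (lines_through hp'm fun l hl hpl => ⟨(h l hl).2 hpl, hpl⟩) with
    ⟨rfl, hum'⟩ | ⟨hp'c, htm'⟩
  · exact hne rfl
  · exact F.v_not_mem_a (F.eq_a_of_t_mem_of_u_mem htm' hum ▸ hpm)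
  · exact F.v_not_mem_a (F.eq_a_of_t_mem_of_u_mem htm hum' ▸ hp'm)
  · exact F.t_not_mem_c
      ((Nondegenerate.eq_or_eq hpm hp'm hpc hp'c).resolve_left hne ▸ htm)

theorem exists_mem_points_not_iff (hq : 3 ≤ order P L) {l l' : L} (hl : l ∉ F.lines)
    (hl' : l' ∉ F.lines) (hne : l ≠ l') : ∃ p ∈ F.points, ¬(p ∈ l ↔ p ∈ l') :=
  F.dual.exists_mem_lines_not_iff (by rwa [Dual.order]) hl hl' hne

theorem points_nonempty : F.points.Nonempty := by
  obtain ⟨p, hpa, hpt, hpu⟩ := exists_point_on_ne_ne F.a F.t F.u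
  exact ⟨p, .inl hpa, hpt, hpu, fun e => F.v_not_mem_a (e ▸ hpa)⟩

theorem ncard_points_le : F.points.ncard ≤ 2 * order P L - 2 := by
  have hsub : F.points ⊆ ({p | p ∈ F.a} \ {F.t, F.u}) ∪ ({p | p ∈ F.b} \ {F.t, F.v}) := by
    rintro p ⟨hp | hp, ht, hu, hv⟩
    · exact .inl ⟨hp, by simp [ht, hu]⟩
    · exact .inr ⟨hp, by simp [ht, hv]⟩
  calc F.points.ncard ≤ _ := Set.ncard_le_ncard hsub
    _ ≤ _ := Set.ncard_union_le _ _
    _ = 2 * order P L - 2 := by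
      rw [ncard_setOf_mem_diff_pair F.t_mem_a F.u_mem_a F.u_ne_t.symm,
        ncard_setOf_mem_diff_pair F.t_mem_b F.v_mem_b F.v_ne_t.symm]
      omega

theorem ncard_lines_le : F.lines.ncard ≤ 2 * order P L - 2 :=
  Dual.order P L ▸ F.dual.ncard_points_le

theorem ncard_vertices_le : F.vertices.ncard ≤ 4 * order P L - 4 := by
  have := F.ncard_points_le
  have := F.ncard_lines_le
  calc F.vertices.ncard ≤ (Sum.inl '' F.points).ncard + (Sum.inr '' F.lines).ncard :=
        Set.ncard_union_le _ _
    _ = F.points.ncard + F.lines.ncard := by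
      rw [Set.ncard_image_of_injective _ Sum.inl_injective,
        Set.ncard_image_of_injective _ Sum.inr_injective]
    _ ≤ 4 * order P L - 4 := by omega

theorem isResolvingSet_vertices (hq : 3 ≤ order P L) : IsResolvingSet P L F.vertices :=
  isResolvingSet_of_separating connected_incGraph F.points_nonempty
    (fun _ _ => F.exists_mem_lines_not_iff hq) (fun _ _ => F.exists_mem_points_not_iff hq)

end ProjectivePlane

end ResolvingFrame

/-- the metric dimension of a projective plane of order q ≥ 3
is at most 4q - 4. -/
theorem metricDim_le_of_three_le_order
    {P L : Type*} [Membership P L] [ProjectivePlane P L] [Fintype P] [Fintype L]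
    (hq : 3 ≤ ProjectivePlane.order P L) :
    metricDim P L ≤ 4 * ProjectivePlane.order P L - 4 := by
  obtain ⟨F⟩ := ResolvingFrame.nonempty (P := P) (L := L)
  exact (metricDim_le_ncard (F.isResolvingSet_vertices hq)).trans F.ncard_vertices_le
end

section
/- If S = P_S ∪ L_S is a resolving set of a projective plane of order q with |S| ≤ 4q − 4, then 2q − 5 ≤ |P_S| ≤ 2q + 1 and 2q − 5 ≤ |L_S| ≤ 2q + 1. -/
/-!
Every vertex of `S` is at distance `2` from the other vertices on its own side of the incidence
graph and at distance `1` or `3` from those on the other side, according to incidence. Hence two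
points outside `S` are told apart only by a line of `S` through exactly one of them: the points
outside `S` have pairwise distinct traces on `L_S`. Among distinct subsets of `L_S` at most one is
empty and at most `|L_S|` are singletons, the others carrying at least two incidences each, while
the lines of `S` carry `(q + 1) |L_S|` incidences in total. This gives
`2 (q² + q + 1 - |P_S|) ≤ (q + 2) |L_S| + 2`, which together with `|P_S| + |L_S| ≤ 4q - 4` forces
`|L_S| ≥ 2q - 5`. Dually `|P_S| ≥ 2q - 5`, and the upper bounds follow by subtraction.
-/

open Configuration

variable (P L : Type*) [Membership P L]

open Finset

section DistinctSubsets

variable {ι α : Type*} {X : Finset ι} {T : Finset α} {f : ι → Finset α}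

theorem card_filter_card_eq_le_choose (hf : Set.InjOn f X) (hT : ∀ i ∈ X, f i ⊆ T) (j : ℕ) :
    #{i ∈ X | #(f i) = j} ≤ (#T).choose j := by
  rw [← card_powersetCard]
  refine card_le_card_of_injOn f (fun i hi => ?_) (hf.mono (filter_subset _ _))
  obtain ⟨hi, hj⟩ := mem_filter.mp hi
  exact mem_powersetCard.mpr ⟨hT i hi, hj⟩

theorem two_mul_card_le_sum_card_add (hf : Set.InjOn f X) (hT : ∀ i ∈ X, f i ⊆ T) :
    2 * #X ≤ ∑ i ∈ X, #(f i) + #T + 2 := by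
  have h₀ := card_filter_card_eq_le_choose hf hT 0
  have h₁ := card_filter_card_eq_le_choose hf hT 1
  rw [Nat.choose_zero_right] at h₀
  rw [Nat.choose_one_right] at h₁
  have hpoint : ∀ i ∈ X,
      2 ≤ #(f i) + ((if #(f i) = 0 then 2 else 0) + if #(f i) = 1 then 1 else 0) := by
    intro i _
    split_ifs <;> omega
  calc 2 * #X = ∑ i ∈ X, 2 := by rw [sum_const, smul_eq_mul, mul_comm]
    _ ≤ ∑ i ∈ X, (#(f i) + ((if #(f i) = 0 then 2 else 0) + if #(f i) = 1 then 1 else 0)) :=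
      sum_le_sum hpoint
    _ = ∑ i ∈ X, #(f i) + (2 * #{i ∈ X | #(f i) = 0} + #{i ∈ X | #(f i) = 1}) := by
      rw [sum_add_distrib, sum_add_distrib, ← sum_filter, ← sum_filter, sum_const, sum_const,
        smul_eq_mul, smul_eq_mul, mul_one, mul_comm]
    _ ≤ ∑ i ∈ X, #(f i) + #T + 2 := by omega

end DistinctSubsets

theorem two_mul_card_le_of_injOn_bipartiteAbove {α β : Type*}
    (r : α → β → Prop) [∀ a b, Decidable (r a b)] {X : Finset α} {T : Finset β} {k : ℕ}
    (hinj : Set.InjOn (fun a => T.bipartiteAbove r a) X)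
    (hk : ∀ b ∈ T, #(X.bipartiteBelow r b) ≤ k) :
    2 * #X ≤ #T * (k + 1) + 2 := by
  have hsum : ∑ b ∈ T, #(X.bipartiteBelow r b) ≤ #T * k := by
    simpa using sum_le_card_nsmul T _ k hk
  have := two_mul_card_le_sum_card_add hinj fun a _ => filter_subset _ T
  rw [sum_card_bipartiteAbove_eq_sum_card_bipartiteBelow] at this
  linarith

namespace incGraph

variable {P L}

@[simp] theorem adj_inl_inr {p : P} {l : L} : (incGraph P L).Adj (.inl p) (.inr l) ↔ p ∈ l :=
  Iff.rfl

@[simp] theorem adj_inr_inl {p : P} {l : L} : (incGraph P L).Adj (.inr l) (.inl p) ↔ p ∈ l :=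
  Iff.rfl

@[simp] theorem not_adj_inl_inl {p p' : P} : ¬(incGraph P L).Adj (.inl p) (.inl p') :=
  id

@[simp] theorem not_adj_inr_inr {l l' : L} : ¬(incGraph P L).Adj (.inr l) (.inr l') :=
  id

theorem isLeft_ne_of_adj {x y : P ⊕ L} (h : (incGraph P L).Adj x y) : x.isLeft ≠ y.isLeft := by
  rcases x with _ | _ <;> rcases y with _ | _ <;> simp_all

def bicoloring : (incGraph P L).Coloring Bool :=
  SimpleGraph.Coloring.mk Sum.isLeft isLeft_ne_of_adj

theorem even_length_iff {x y : P ⊕ L} (w : (incGraph P L).Walk x y) :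
    Even w.length ↔ x.isLeft = y.isLeft := by
  rw [bicoloring.even_length_iff_congr w]
  exact Bool.eq_iff_iff.symm

variable [ProjectivePlane P L]

theorem exists_adj_adj {x y : P ⊕ L} (hxy : x ≠ y) (h : x.isLeft = y.isLeft) :
    ∃ z, (incGraph P L).Adj x z ∧ (incGraph P L).Adj z y := by
  rcases x with p | l <;> rcases y with p' | l' <;> simp only [Sum.isLeft_inl, Sum.isLeft_inr,
    reduceCtorEq] at h
  · have hp : p ≠ p' := fun h => hxy (congrArg _ h)
    exact ⟨.inr (HasLines.mkLine hp), HasLines.mkLine_ax hp⟩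
  · have hl : l ≠ l' := fun h => hxy (congrArg _ h)
    exact ⟨.inl (HasPoints.mkPoint hl), HasPoints.mkPoint_ax hl⟩

theorem dist_eq_two {x y : P ⊕ L} (hxy : x ≠ y) (h : x.isLeft = y.isLeft) :
    (incGraph P L).dist x y = 2 := by
  obtain ⟨z, hxz, hzy⟩ := exists_adj_adj hxy h
  have hle : (incGraph P L).dist x y ≤ 2 := by
    simpa using (incGraph P L).dist_le (hxz.toWalk.append hzy.toWalk)
  have hlt := (hxz.reachable.trans hzy.reachable).one_lt_dist_of_ne_of_not_adj hxy
    fun hadj => isLeft_ne_of_adj hadj h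
  omega

variable [Finite P] [Finite L]

theorem exists_adj (x : P ⊕ L) : ∃ z, (incGraph P L).Adj x z := by
  rcases x with p | l
  · have : 0 < lineCount L p := by rw [ProjectivePlane.lineCount_eq]; omega
    obtain ⟨⟨l, hl⟩⟩ := (Nat.card_pos_iff.mp this).1
    exact ⟨.inr l, hl⟩
  · have : 0 < pointCount P l := by rw [ProjectivePlane.pointCount_eq]; omega
    obtain ⟨⟨p, hp⟩⟩ := (Nat.card_pos_iff.mp this).1
    exact ⟨.inl p, hp⟩

/-- A non-adjacent vertex of the other side is reached in three steps through a neighbour of `y`,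
and no faster since walks between the two sides have odd length. -/
theorem dist_eq_three {x y : P ⊕ L} (h : x.isLeft ≠ y.isLeft) (hadj : ¬(incGraph P L).Adj x y) :
    (incGraph P L).dist x y = 3 := by
  obtain ⟨z, hyz⟩ := exists_adj y
  have hxz : x.isLeft = z.isLeft := by
    have := isLeft_ne_of_adj hyz
    grind
  have hne : x ≠ z := by rintro rfl; exact hadj hyz.symm
  obtain ⟨m, hxm, hmz⟩ := exists_adj_adj hne hxz
  let w := hxm.toWalk.append (hmz.toWalk.append hyz.symm.toWalk)
  have hle : (incGraph P L).dist x y ≤ 3 := by simpa [w] using (incGraph P L).dist_le w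
  obtain ⟨w', hw'⟩ := SimpleGraph.Reachable.exists_walk_length_eq_dist ⟨w⟩
  have hodd : ¬Even ((incGraph P L).dist x y) := hw' ▸ (even_length_iff w').not.mpr h
  have hne1 : (incGraph P L).dist x y ≠ 1 :=
    fun h1 => hadj (SimpleGraph.dist_eq_one_iff_adj.mp h1)
  rw [Nat.not_even_iff_odd, Nat.odd_iff] at hodd
  omega

end incGraph

variable {P L} [ProjectivePlane P L]

theorem IsResolvingSet.eq_of_forall_adj_iff [Finite P] [Finite L] {S : Set (P ⊕ L)}
    (hS : IsResolvingSet P L S) {x y : P ⊕ L} (hx : x ∉ S) (hy : y ∉ S) (hxy : x.isLeft = y.isLeft)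
    (hadj : ∀ s ∈ S, (incGraph P L).Adj x s ↔ (incGraph P L).Adj y s) : x = y := by
  refine hS x y fun s hs => ?_
  have hxs : x ≠ s := fun h => hx (h ▸ hs)
  have hys : y ≠ s := fun h => hy (h ▸ hs)
  by_cases hside : x.isLeft = s.isLeft
  · rw [incGraph.dist_eq_two hxs hside, incGraph.dist_eq_two hys (hxy ▸ hside)]
  have hside' : y.isLeft ≠ s.isLeft := hxy ▸ hside
  by_cases hxs' : (incGraph P L).Adj x s
  · rw [SimpleGraph.dist_eq_one_iff_adj.mpr hxs',
      SimpleGraph.dist_eq_one_iff_adj.mpr ((hadj s hs).mp hxs')]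
  · rw [incGraph.dist_eq_three hside hxs',
      incGraph.dist_eq_three hside' (mt (hadj s hs).mpr hxs')]

theorem IsResolvingSet.two_mul_card_points_le [Fintype P] [Finite L] {u : Finset (P ⊕ L)}
    (hu : IsResolvingSet P L u) :
    2 * (ProjectivePlane.order P L ^ 2 + ProjectivePlane.order P L + 1) ≤
      2 * #u.toLeft + #u.toRight * (ProjectivePlane.order P L + 2) + 2 := by
  classical
  have hinj : Set.InjOn (fun p : P => u.toRight.bipartiteAbove (· ∈ ·) p) ↑u.toLeftᶜ := by
    intro p hp p' hp' htrace
    refine Sum.inl_injective (hu.eq_of_forall_adj_iff (by simpa using hp) (by simpa using hp')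
      rfl ?_)
    rintro (_ | l) (hl : _ ∈ u)
    · simp
    · simpa [hl] using Finset.ext_iff.mp htrace l
  have hcount : ∀ l ∈ u.toRight, #((u.toLeftᶜ).bipartiteBelow (· ∈ ·) l) ≤
      ProjectivePlane.order P L + 1 := by
    intro l _
    rw [← ProjectivePlane.pointCount_eq P l, pointCount, Nat.card_eq_fintype_card,
      Fintype.card_subtype]
    exact card_le_card (filter_subset_filter _ (subset_univ _))
  have := two_mul_card_le_of_injOn_bipartiteAbove _ hinj hcount
  linarith [card_compl_add_card u.toLeft, ProjectivePlane.card_points P L]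

theorem IsResolvingSet.two_mul_card_lines_le [Finite P] [Fintype L] {u : Finset (P ⊕ L)}
    (hu : IsResolvingSet P L u) :
    2 * (ProjectivePlane.order P L ^ 2 + ProjectivePlane.order P L + 1) ≤
      2 * #u.toRight + #u.toLeft * (ProjectivePlane.order P L + 2) + 2 := by
  classical
  have hinj : Set.InjOn (fun l : L => u.toLeft.bipartiteAbove (fun l p => p ∈ l) l)
      ↑u.toRightᶜ := by
    intro l hl l' hl' htrace
    refine Sum.inr_injective (hu.eq_of_forall_adj_iff (by simpa using hl) (by simpa using hl')
      rfl ?_)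
    rintro (p | _) (hp : _ ∈ u)
    · simpa [hp] using Finset.ext_iff.mp htrace p
    · simp
  have hcount : ∀ p ∈ u.toLeft, #((u.toRightᶜ).bipartiteBelow (fun l p => p ∈ l) p) ≤
      ProjectivePlane.order P L + 1 := by
    intro p _
    rw [← ProjectivePlane.lineCount_eq (P := P) L p, lineCount, Nat.card_eq_fintype_card,
      Fintype.card_subtype]
    exact card_le_card (filter_subset_filter _ (subset_univ _))
  have := two_mul_card_le_of_injOn_bipartiteAbove _ hinj hcount
  linarith [card_compl_add_card u.toRight, ProjectivePlane.card_lines P L]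

theorem two_mul_sub_five_le {q a t : ℕ} (hcount : 2 * (q ^ 2 + q + 1) ≤ 2 * a + t * (q + 2) + 2)
    (hsize : a + t ≤ 4 * q - 4) : 2 * q - 5 ≤ t := by
  by_contra! ht
  have : (t + 6) * q ≤ 2 * q * q := Nat.mul_le_mul_right q (by omega)
  have : 4 ≤ 4 * q := by omega
  zify [this] at hsize
  nlinarith

/-- if S is a resolving set of a projective plane of order q with
|S| ≤ 4q - 4, then 2q - 5 ≤ |P_S| ≤ 2q + 1 and 2q - 5 ≤ |L_S| ≤ 2q + 1. -/
theorem resolvingSet_point_line_part_bounds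
    {P L : Type*} [Membership P L] [ProjectivePlane P L] [Fintype P] [Fintype L]
    (S : Set (P ⊕ L)) (hS : IsResolvingSet P L S)
    (hcard : S.ncard ≤ 4 * ProjectivePlane.order P L - 4) :
    (2 * ProjectivePlane.order P L - 5 ≤ ({p : P | Sum.inl p ∈ S}).ncard ∧
      ({p : P | Sum.inl p ∈ S}).ncard ≤ 2 * ProjectivePlane.order P L + 1) ∧
    (2 * ProjectivePlane.order P L - 5 ≤ ({l : L | Sum.inr l ∈ S}).ncard ∧
      ({l : L | Sum.inr l ∈ S}).ncard ≤ 2 * ProjectivePlane.order P L + 1) := by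
  obtain ⟨u, rfl⟩ := S.toFinite.exists_finset_coe
  have hpoints : {p : P | Sum.inl p ∈ (u : Set (P ⊕ L))}.ncard = #u.toLeft := by
    rw [← Set.ncard_coe_finset]; congr; ext; simp
  have hlines : {l : L | Sum.inr l ∈ (u : Set (P ⊕ L))}.ncard = #u.toRight := by
    rw [← Set.ncard_coe_finset]; congr; ext; simp
  rw [Set.ncard_coe_finset, ← card_toLeft_add_card_toRight] at hcard
  have hL := two_mul_sub_five_le hS.two_mul_card_points_le hcard
  have hP := two_mul_sub_five_le hS.two_mul_card_lines_le (by omega)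
  rw [hpoints, hlines]
  omega
end

section
/- Counting lemma: Let e, f be two distinct lines of a projective plane of order q meeting at P, with [e]\{P} = {R_1,…,R_q} and [f]\{P} = {Q_1,…,Q_q}, and let L be a set of lines none of which passes through P. Set r_i = |L ∩ [R_i]|, d_i = max(|L ∩ [Q_i]| − 1, 0), m = d_1 + ⋯ + d_q. Then the number C of points outside [e] ∪ [f] covered by some line of L satisfies C ≤ |L|(q−1) − r_i(|L| − r_i) + m ≤ |L|q − r_i(|L| − r_i + 1) for every index i. -/
open Configuration

variable (P L : Type*) [Membership P L]

/-!
Write `mult x` for the number of lines of `L` through `x`. Every line of `L` avoids `P`, so it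
meets `e ∪ f` in exactly two points and has `q - 1` points off `e ∪ f`; double counting gives
`C + D = |L| (q - 1)`, where `D = ∑ (mult x - 1)` over the points off `e ∪ f`. A line of `L`
through `R` and one not through `R` meet in a point `x` off `e`, and `x` carries at most
`mult x - 1` such pairs because only one line joins it to `R`; hence `r (|L| - r) ≤ m + D`.
Finally each line of `L` meets `f` in exactly one point other than `P`, and the lines through `R`
meet it in distinct points, so `m + r ≤ |L|`.
-/

open Finset in
theorem Finset.sum_eq_card_filter_pos_add_sum_sub_one {ι : Type*} (s : Finset ι) (g : ι → ℕ) :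
    ∑ i ∈ s, g i = #{i ∈ s | 0 < g i} + ∑ i ∈ s, (g i - 1) := by
  rw [card_filter, ← sum_add_distrib]
  exact sum_congr rfl fun i _ => by split_ifs <;> omega

namespace Configuration

open Finset HasPoints

variable {P L : Type*} [Membership P L]

open scoped Classical

theorem card_covered_add_sum_sub_one (X : Finset P) (Ls : Finset L) :
    #{x ∈ X | ∃ l ∈ Ls, x ∈ l} + ∑ x ∈ X, (#{l ∈ Ls | x ∈ l} - 1) =
      ∑ l ∈ Ls, #{x ∈ X | x ∈ l} := by
  have hcovered : #{x ∈ X | ∃ l ∈ Ls, x ∈ l} = #{x ∈ X | 0 < #{l ∈ Ls | x ∈ l}} := by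
    simp only [card_pos, filter_nonempty_iff]
  rw [hcovered, ← sum_eq_card_filter_pos_add_sum_sub_one]
  exact sum_card_bipartiteAbove_eq_sum_card_bipartiteBelow (fun x l => x ∈ l)

theorem card_filter_mem_le_one [Nondegenerate P L] {Ls : Finset L} {R x : P}
    (hLs : ∀ l ∈ Ls, R ∈ l) (hx : x ≠ R) : #{l ∈ Ls | x ∈ l} ≤ 1 := by
  refine card_le_one.mpr fun l₁ h₁ l₂ h₂ => ?_
  rw [mem_filter] at h₁ h₂
  exact (Nondegenerate.eq_or_eq h₁.2 (hLs l₁ h₁.1) h₂.2 (hLs l₂ h₂.1)).resolve_left hx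

theorem filter_mem_and_mem_eq_singleton [HasPoints P L] [Fintype P] {l f : L} (h : l ≠ f) :
    ({x | x ∈ l ∧ x ∈ f} : Finset P) = {(mkPoint h : P)} := by
  obtain ⟨hl, hf⟩ := mkPoint_ax (P := P) h
  ext x
  simp only [mem_filter, mem_univ, true_and, mem_singleton]
  refine ⟨fun ⟨hxl, hxf⟩ => (Nondegenerate.eq_or_eq hxl hl hxf hf).resolve_right h, ?_⟩
  rintro rfl
  exact ⟨hl, hf⟩

theorem card_filter_mem_notMem_notMem_add_two [ProjectivePlane P L] [Fintype P] [Finite L]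
    {e f l : L} (hef : e ≠ f) (hl : (mkPoint hef : P) ∉ l) :
    #{x | x ∈ l ∧ x ∉ e ∧ x ∉ f} + 2 = ProjectivePlane.order P L + 1 := by
  obtain ⟨hPe, hPf⟩ := mkPoint_ax (P := P) hef
  have hle : l ≠ e := by rintro rfl; exact hl hPe
  have hlf : l ≠ f := by rintro rfl; exact hl hPf
  have hmeet_f : ({x | x ∈ l ∧ x ∉ e ∧ x ∈ f} : Finset P) = ({x | x ∈ l ∧ x ∈ f} : Finset P) :=
    filter_congr fun x _ => and_congr_right fun hxl => ⟨And.right, fun hxf => ⟨fun hxe =>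
      hl ((Nondegenerate.eq_or_eq hxe hPe hxf hPf).resolve_right hef ▸ hxl), hxf⟩⟩
  have hpoints : #{x | x ∈ l} = ProjectivePlane.order P L + 1 := by
    rw [← ProjectivePlane.pointCount_eq P l, pointCount, Nat.card_eq_fintype_card,
      Fintype.card_subtype]
  rw [← hpoints, ← card_filter_add_card_filter_not (s := {x | x ∈ l}) (· ∈ e),
    ← card_filter_add_card_filter_not (s := {x ∈ {x | x ∈ l} | x ∉ e}) (· ∈ f)]
  simp only [filter_filter, and_assoc, hmeet_f, filter_mem_and_mem_eq_singleton hle,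
    filter_mem_and_mem_eq_singleton hlf, card_singleton]
  omega

theorem card_mul_card_le_sum_sub_one [HasPoints P L] [Fintype P] (Ls : Finset L) {R : P} {e : L}
    (hRe : R ∈ e) (he : e ∉ Ls) :
    #{l ∈ Ls | R ∈ l} * #{l ∈ Ls | R ∉ l} ≤
      ∑ x ∈ ({x | x ∉ e} : Finset P), (#{l ∈ Ls | x ∈ l} - 1) := by
  set Lin := {l ∈ Ls | R ∈ l}
  set Lout := {l ∈ Ls | R ∉ l}
  have hcover : Lin ×ˢ Lout ⊆ ({x | x ∉ e} : Finset P).biUnion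
      fun x => {l ∈ Lin | x ∈ l} ×ˢ {l ∈ Lout | x ∈ l} := by
    rintro ⟨l₁, l₂⟩ h
    simp only [Lin, Lout, mem_product, mem_filter] at h
    obtain ⟨⟨hl₁, hR₁⟩, hl₂, hR₂⟩ := h
    have hne : l₁ ≠ l₂ := by rintro rfl; exact hR₂ hR₁
    obtain ⟨hx₁, hx₂⟩ := mkPoint_ax (P := P) hne
    have hxR : (mkPoint hne : P) ≠ R := by rintro h; exact hR₂ (h ▸ hx₂)
    have hxe : (mkPoint hne : P) ∉ e := fun hxe =>
      he ((Nondegenerate.eq_or_eq hx₁ hR₁ hxe hRe).resolve_left hxR ▸ hl₁)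
    simp only [Lin, Lout, mem_biUnion, mem_product, mem_filter, mem_univ, true_and]
    exact ⟨mkPoint hne, hxe, ⟨⟨hl₁, hR₁⟩, hx₁⟩, ⟨hl₂, hR₂⟩, hx₂⟩
  have hfiber : ∀ x ∈ ({x | x ∉ e} : Finset P),
      #({l ∈ Lin | x ∈ l} ×ˢ {l ∈ Lout | x ∈ l}) ≤ #{l ∈ Ls | x ∈ l} - 1 := by
    intro x hx
    have hxR : x ≠ R := by rintro rfl; exact (mem_filter.1 hx).2 hRe
    have hle : #{l ∈ Lin | x ∈ l} ≤ 1 :=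
      card_filter_mem_le_one (fun l hl => (mem_filter.1 hl).2) hxR
    have hsplit : #{l ∈ Lin | x ∈ l} + #{l ∈ Lout | x ∈ l} = #{l ∈ Ls | x ∈ l} := by
      rw [← card_filter_add_card_filter_not (s := {l ∈ Ls | x ∈ l}) (R ∈ ·)]
      simp only [Lin, Lout, filter_filter, and_comm]
    rw [card_product]
    interval_cases #{l ∈ Lin | x ∈ l} <;> omega
  calc _ = #(Lin ×ˢ Lout) := (card_product _ _).symm
    _ ≤ _ := card_le_card hcover
    _ ≤ _ := card_biUnion_le
    _ ≤ _ := sum_le_sum hfiber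

theorem card_filter_add_sum_sub_one_le [HasPoints P L] [Fintype P] (Ls : Finset L) {R : P} {f : L}
    (hRf : R ∉ f) (hf : f ∉ Ls) :
    #{l ∈ Ls | R ∈ l} + ∑ x ∈ ({x | x ∈ f} : Finset P), (#{l ∈ Ls | x ∈ l} - 1) ≤ #Ls := by
  have hmeet : ∀ Ms ⊆ Ls, ∑ l ∈ Ms, #{x ∈ ({x | x ∈ f} : Finset P) | x ∈ l} = #Ms := by
    intro Ms hMs
    rw [card_eq_sum_ones]
    refine sum_congr rfl fun l hl => ?_
    have hlf : l ≠ f := by rintro rfl; exact hf (hMs hl)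
    rw [filter_filter, ← card_singleton (mkPoint hlf : P), ← filter_mem_and_mem_eq_singleton hlf]
    simp only [and_comm]
  set Lin := {l ∈ Ls | R ∈ l}
  have hLin : #Lin = #{x ∈ ({x | x ∈ f} : Finset P) | ∃ l ∈ Lin, x ∈ l} := by
    rw [← hmeet Lin (filter_subset _ _), ← card_covered_add_sum_sub_one, add_eq_left]
    refine sum_eq_zero fun x hx => ?_
    have hxR : x ≠ R := by rintro rfl; exact hRf (mem_filter.1 hx).2
    have := card_filter_mem_le_one (fun l hl => (mem_filter.1 hl).2) hxR (Ls := Lin)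
    omega
  have hcovered : #{x ∈ ({x | x ∈ f} : Finset P) | ∃ l ∈ Lin, x ∈ l} ≤
      #{x ∈ ({x | x ∈ f} : Finset P) | ∃ l ∈ Ls, x ∈ l} :=
    card_le_card <| monotone_filter_right _ fun _ _ ⟨l, hl, hxl⟩ => ⟨l, filter_subset _ _ hl, hxl⟩
  rw [← hmeet Ls subset_rfl, ← card_covered_add_sum_sub_one]
  omega

theorem card_covered_add_sum_sub_one_add_two_mul [ProjectivePlane P L] [Fintype P] [Finite L]
    {e f : L} (hef : e ≠ f) {Ls : Finset L} (hLs : ∀ l ∈ Ls, (mkPoint hef : P) ∉ l) :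
    #{x | x ∉ e ∧ x ∉ f ∧ ∃ l ∈ Ls, x ∈ l} +
        ∑ x ∈ ({x | x ∉ e ∧ x ∉ f} : Finset P), (#{l ∈ Ls | x ∈ l} - 1) + 2 * #Ls =
      #Ls * (ProjectivePlane.order P L + 1) := by
  have hline : ∀ l ∈ Ls, #{x | x ∉ e ∧ x ∉ f ∧ x ∈ l} + 2 = ProjectivePlane.order P L + 1 := by
    intro l hl
    rw [← card_filter_mem_notMem_notMem_add_two hef (hLs l hl)]
    exact congrArg (#· + 2) (filter_congr fun x _ => by tauto)
  have hcount := card_covered_add_sum_sub_one ({x | x ∉ e ∧ x ∉ f} : Finset P) Ls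
  have hsum := sum_congr rfl hline
  simp only [filter_filter, and_assoc] at hcount
  rw [sum_add_distrib, sum_const, sum_const, smul_eq_mul, smul_eq_mul] at hsum
  linarith

theorem card_covered_le [ProjectivePlane P L] [Fintype P] [Finite L] {e f : L} (hef : e ≠ f)
    {Ls : Finset L} (hLs : ∀ l ∈ Ls, (mkPoint hef : P) ∉ l) {R : P} (hRe : R ∈ e)
    (hRP : R ≠ mkPoint hef) :
    (#{x | x ∉ e ∧ x ∉ f ∧ ∃ l ∈ Ls, x ∈ l} : ℤ) ≤
        #Ls * ((ProjectivePlane.order P L : ℤ) - 1) -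
          #{l ∈ Ls | R ∈ l} * (#Ls - #{l ∈ Ls | R ∈ l}) +
          (∑ x ∈ ({x | x ∈ f} : Finset P), (#{l ∈ Ls | x ∈ l} - 1) : ℕ) ∧
      #Ls * ((ProjectivePlane.order P L : ℤ) - 1) -
          #{l ∈ Ls | R ∈ l} * (#Ls - #{l ∈ Ls | R ∈ l}) +
          (∑ x ∈ ({x | x ∈ f} : Finset P), (#{l ∈ Ls | x ∈ l} - 1) : ℕ) ≤
        #Ls * (ProjectivePlane.order P L : ℤ) -
          #{l ∈ Ls | R ∈ l} * (#Ls - #{l ∈ Ls | R ∈ l} + 1) := by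
  obtain ⟨hPe, hPf⟩ := mkPoint_ax (P := P) hef
  have hRf : R ∉ f := fun hRf => hRP ((Nondegenerate.eq_or_eq hRe hPe hRf hPf).resolve_right hef)
  have hcount := card_covered_add_sum_sub_one_add_two_mul hef hLs
  have hpair := card_mul_card_le_sum_sub_one Ls hRe fun he => hLs e he hPe
  have hline := card_filter_add_sum_sub_one_le Ls hRf fun hf => hLs f hf hPf
  have hsplit := card_filter_add_card_filter_not (s := Ls) (R ∈ ·)
  have hoff_e : ∑ x ∈ ({x | x ∉ e} : Finset P), (#{l ∈ Ls | x ∈ l} - 1) ≤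
      ∑ x ∈ ({x | x ∈ f} : Finset P), (#{l ∈ Ls | x ∈ l} - 1) +
        ∑ x ∈ ({x | x ∉ e ∧ x ∉ f} : Finset P), (#{l ∈ Ls | x ∈ l} - 1) := by
    rw [← sum_filter_add_sum_filter_not _ (· ∈ f)]
    simp only [filter_filter]
    exact add_le_add (sum_le_sum_of_subset fun x => by simp +contextual) le_rfl
  have hrs : (#{l ∈ Ls | R ∈ l} : ℤ) * (#Ls - #{l ∈ Ls | R ∈ l}) =
      #{l ∈ Ls | R ∈ l} * #{l ∈ Ls | R ∉ l} := by
    rw [← hsplit]; push_cast; ring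
  constructor <;> push_cast <;> linarith

end Configuration

open Configuration.HasPoints in
/-- the counting lemma (Lemma 2.8) for points covered by a set of lines
avoiding the intersection point of two fixed lines. -/
theorem counting_lemma
    {P L : Type*} [Membership P L] [ProjectivePlane P L] [Fintype P] [Fintype L]
    (e f : L) (hef : e ≠ f) (Lset : Set L)
    (hLP : ∀ l ∈ Lset, mkPoint hef ∉ l)
    (R : P) (hRe : R ∈ e) (hRP : R ≠ mkPoint hef) :
    (({x : P | x ∉ e ∧ x ∉ f ∧ ∃ l ∈ Lset, x ∈ l}).ncard : ℤ) ≤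
        (Lset.ncard : ℤ) * ((ProjectivePlane.order P L : ℤ) - 1) -
          (({l ∈ Lset | R ∈ l}).ncard : ℤ) *
            ((Lset.ncard : ℤ) - ({l ∈ Lset | R ∈ l}).ncard) +
          (∑ Qp : P, (({l ∈ Lset | Qp ∈ l ∧ Qp ∈ f ∧ Qp ≠ mkPoint hef}).ncard - 1) : ℕ) ∧
      (Lset.ncard : ℤ) * ((ProjectivePlane.order P L : ℤ) - 1) -
          (({l ∈ Lset | R ∈ l}).ncard : ℤ) *
            ((Lset.ncard : ℤ) - ({l ∈ Lset | R ∈ l}).ncard) +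
          (∑ Qp : P, (({l ∈ Lset | Qp ∈ l ∧ Qp ∈ f ∧ Qp ≠ mkPoint hef}).ncard - 1) : ℕ) ≤
        (Lset.ncard : ℤ) * (ProjectivePlane.order P L : ℤ) -
          (({l ∈ Lset | R ∈ l}).ncard : ℤ) *
            ((Lset.ncard : ℤ) - ({l ∈ Lset | R ∈ l}).ncard + 1) := by
  classical
  set Ls := Lset.toFinset
  have hLs : ∀ l ∈ Ls, mkPoint hef ∉ l := fun l hl => hLP l (Set.mem_toFinset.1 hl)
  have hn : Lset.ncard = Ls.card := Set.ncard_eq_toFinset_card' Lset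
  have hr : ({l ∈ Lset | R ∈ l}).ncard = (Ls.filter (R ∈ ·)).card := by
    rw [Set.ncard_eq_toFinset_card']; congr; ext; simp [Ls]
  have hC : ({x : P | x ∉ e ∧ x ∉ f ∧ ∃ l ∈ Lset, x ∈ l}).ncard =
      (Finset.univ.filter fun x : P => x ∉ e ∧ x ∉ f ∧ ∃ l ∈ Ls, x ∈ l).card := by
    rw [Set.ncard_eq_toFinset_card']; congr; ext; simp [Ls]
  have hm : ∑ Qp : P, (({l ∈ Lset | Qp ∈ l ∧ Qp ∈ f ∧ Qp ≠ mkPoint hef}).ncard - 1) =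
      ∑ x ∈ Finset.univ.filter (· ∈ f), ((Ls.filter (x ∈ ·)).card - 1) := by
    rw [Finset.sum_filter]
    refine Finset.sum_congr rfl fun x _ => ?_
    rw [Set.ncard_eq_toFinset_card']
    split_ifs with hxf
    · by_cases hxP : x = mkPoint hef
      · simp [hxP, Finset.filter_false_of_mem hLs]
      · congr 2; ext l; simp [Ls, hxf, hxP]
    · simp [hxf]
  rw [hn, hr, hC, hm]
  exact card_covered_le hef hLs hRe hRP
end

section
/- A point set S in a finite projective plane is a semi-resolving set (it resolves all lines by distances in the incidence graph) if and only if: (1) there is at most one line skew to S, and (2) through every point of S there is at most one line tangent to S. -/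
open Configuration

variable (P L : Type*) [Membership P L]

/-- A set of points is a semi-resolving set if the ordered distance lists (in the
incidence graph) to its elements distinguish all lines. -/
def IsSemiResolvingSet (S : Set P) : Prop :=
  ∀ l m : L,
    (∀ p ∈ S, (incGraph P L).dist (Sum.inr l) (Sum.inl p) =
      (incGraph P L).dist (Sum.inr m) (Sum.inl p)) → l = m

/-- A double blocking set: every line contains at least two of its points. -/
def IsDoubleBlocking (B : Set P) : Prop :=
  ∀ l : L, 2 ≤ ({p ∈ B | p ∈ l}).ncard

/-- τ₂ : the minimum size of a double blocking set. -/
noncomputable def tau2 : ℕ :=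
  sInf {n | ∃ B : Finset P, B.card = n ∧ IsDoubleBlocking P L ↑B}

/-- μ_S : the minimum size of a semi-resolving set. -/
noncomputable def muS : ℕ :=
  sInf {n | ∃ S : Finset P, S.card = n ∧ IsSemiResolvingSet P L ↑S}

/-!
In the incidence graph a line is at distance 1 from its points and at distance 3 from every
other point (the graph is bipartite and any two points are joined by a line), so `S` is
semi-resolving exactly when lines are determined by their traces on `S`. Two distinct lines
with the same trace contain all of it, and they meet in at most one point: so either both are
skew to `S`, or both are tangent to `S` at the same point.
-/

variable {P L}

theorem Set.eq_singleton_of_mem_of_ncard_eq_one {α : Type*} {s : Set α} {a : α} (ha : a ∈ s)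
    (hs : s.ncard = 1) : s = {a} := by
  obtain ⟨b, rfl⟩ := Set.ncard_eq_one.1 hs
  rw [Set.mem_singleton_iff.1 ha]

namespace Configuration

theorem ProjectivePlane.exists_mem [ProjectivePlane P L] (l : L) : ∃ p : P, p ∈ l := by
  obtain ⟨-, p₂, -, -, l₂, -, -, -, -, hp₂l₂, -⟩ := ProjectivePlane.exists_config (P := P) (L := L)
  by_cases hl : l = l₂
  · exact ⟨p₂, hl ▸ hp₂l₂⟩
  · exact ⟨_, (HasPoints.mkPoint_ax hl).1⟩

theorem Nondegenerate.eq_of_mem_of_mem [Nondegenerate P L] {p q : P} {l m : L} (hlm : l ≠ m)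
    (hpl : p ∈ l) (hpm : p ∈ m) (hql : q ∈ l) (hqm : q ∈ m) : p = q :=
  (Nondegenerate.eq_or_eq hpl hql hpm hqm).resolve_right hlm

end Configuration

namespace incGraph

def sideColoring : (incGraph P L).Coloring Bool :=
  SimpleGraph.Coloring.mk Sum.isLeft <| by
    rintro (p | l) (p' | l') h <;> simp_all [incGraph]

theorem odd_length_walk {l : L} {p : P} (w : (incGraph P L).Walk (.inr l) (.inl p)) :
    Odd w.length :=
  (sideColoring.odd_length_iff_not_congr w).2 (iff_of_true Bool.false_ne_true rfl)

theorem dist_eq_one_of_mem {p : P} {l : L} (h : p ∈ l) :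
    (incGraph P L).dist (.inr l) (.inl p) = 1 :=
  SimpleGraph.dist_eq_one_iff_adj.2 h

theorem dist_eq_three_of_not_mem [ProjectivePlane P L] {p : P} {l : L} (h : p ∉ l) :
    (incGraph P L).dist (.inr l) (.inl p) = 3 := by
  obtain ⟨q, hq⟩ := ProjectivePlane.exists_mem (P := P) l
  have hqp : q ≠ p := fun hqp => h (hqp ▸ hq)
  have hm := HasLines.mkLine_ax (L := L) hqp
  let w : (incGraph P L).Walk (.inr l) (.inl p) :=
    .cons (show (incGraph P L).Adj _ (.inl q) from hq)
      (.cons (show (incGraph P L).Adj _ (.inr (HasLines.mkLine hqp)) from hm.1)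
        (.cons (show (incGraph P L).Adj _ (.inl p) from hm.2) .nil))
  have hle : (incGraph P L).dist (.inr l) (.inl p) ≤ 3 := SimpleGraph.dist_le w
  obtain ⟨w', hw'⟩ := SimpleGraph.Reachable.exists_walk_length_eq_dist ⟨w⟩
  obtain ⟨k, hk⟩ := hw' ▸ odd_length_walk w'
  have hne : (incGraph P L).dist (.inr l) (.inl p) ≠ 1 :=
    mt SimpleGraph.dist_eq_one_iff_adj.1 h
  omega

theorem dist_eq_dist_iff [ProjectivePlane P L] (p : P) (l m : L) :
    (incGraph P L).dist (.inr l) (.inl p) = (incGraph P L).dist (.inr m) (.inl p) ↔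
      (p ∈ l ↔ p ∈ m) := by
  by_cases hl : p ∈ l <;> by_cases hm : p ∈ m <;>
    simp [hl, hm, dist_eq_one_of_mem, dist_eq_three_of_not_mem]

end incGraph

open Function

theorem isSemiResolvingSet_iff_injective [ProjectivePlane P L] (S : Set P) :
    IsSemiResolvingSet P L S ↔ Injective fun l : L => {x ∈ S | x ∈ l} := by
  simp only [IsSemiResolvingSet, Injective, incGraph.dist_eq_dist_iff, Set.ext_iff,
    Set.mem_ofPred_eq, and_congr_right_iff]

theorem injective_sep_mem_iff [Nondegenerate P L] (S : Set P) :
    (Injective fun l : L => {x ∈ S | x ∈ l}) ↔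
      ({l : L | ∀ p ∈ S, p ∉ l}).Subsingleton ∧
      (∀ p ∈ S, ({l : L | p ∈ l ∧ ({x ∈ S | x ∈ l}).ncard = 1}).Subsingleton) := by
  have skew_iff (l : L) : (∀ p ∈ S, p ∉ l) ↔ {x ∈ S | x ∈ l} = ∅ := by
    simp [Set.eq_empty_iff_forall_notMem]
  have tangent_eq {p : P} (hp : p ∈ S) {l : L} (hl : p ∈ l ∧ ({x ∈ S | x ∈ l}).ncard = 1) :
      {x ∈ S | x ∈ l} = {p} :=
    Set.eq_singleton_of_mem_of_ncard_eq_one ⟨hp, hl.1⟩ hl.2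
  constructor
  · intro hinj
    refine ⟨fun l hl m hm => hinj ?_, fun p hp l hl m hm => hinj ?_⟩
    · exact ((skew_iff l).1 hl).trans ((skew_iff m).1 hm).symm
    · exact (tangent_eq hp hl).trans (tangent_eq hp hm).symm
  · rintro ⟨hskew, htangent⟩ l m (htrace : {x ∈ S | x ∈ l} = {x ∈ S | x ∈ m})
    by_contra hlm
    rcases Set.eq_empty_or_nonempty {x ∈ S | x ∈ l} with hempty | ⟨p, hpS, hpl⟩
    · exact hlm (hskew ((skew_iff l).2 hempty) ((skew_iff m).2 (htrace ▸ hempty)))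
    · have hpm : p ∈ m := (htrace ▸ ⟨hpS, hpl⟩ : p ∈ {x ∈ S | x ∈ m}).2
      have hsingle : {x ∈ S | x ∈ l} = {p} :=
        Set.Subsingleton.eq_singleton_of_mem (fun x hx y hy => by
          have hxm := (htrace ▸ hx : x ∈ {x ∈ S | x ∈ m}).2
          have hym := (htrace ▸ hy : y ∈ {x ∈ S | x ∈ m}).2
          exact Nondegenerate.eq_of_mem_of_mem hlm hx.2 hxm hy.2 hym) ⟨hpS, hpl⟩
      refine hlm (htangent p hpS ⟨hpl, ?_⟩ ⟨hpm, ?_⟩)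
      · simp [hsingle]
      · simp [← htrace, hsingle]

theorem isSemiResolvingSet_iff_general
    {P L : Type*} [Membership P L] [ProjectivePlane P L]
    (S : Set P) :
    IsSemiResolvingSet P L S ↔
      ({l : L | ∀ p ∈ S, p ∉ l}).Subsingleton ∧
      (∀ p ∈ S, ({l : L | p ∈ l ∧ ({x ∈ S | x ∈ l}).ncard = 1}).Subsingleton) :=
  (isSemiResolvingSet_iff_injective S).trans (injective_sep_mem_iff S)

/-- a point set is a semi-resolving set iff at most one line is skew to it
and through every point of it there is at most one tangent line. -/
theorem isSemiResolvingSet_iff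
    {P L : Type*} [Membership P L] [ProjectivePlane P L] [Finite P] [Finite L]
    (S : Set P) :
    IsSemiResolvingSet P L S ↔
      ({l : L | ∀ p ∈ S, p ∉ l}).Subsingleton ∧
      (∀ p ∈ S, ({l : L | p ∈ l ∧ ({x ∈ S | x ∈ l}).ncard = 1}).Subsingleton) :=
  isSemiResolvingSet_iff_general S
end

section
/- If B is a double blocking set in a finite projective plane and P ∈ B, then B \ {P} is a semi-resolving set; hence μ_S(Π) ≤ τ₂(Π) − 1. -/
open Configuration

variable (P L : Type*) [Membership P L]

variable {P L}

theorem incGraph_dist_eq_one_iff (l : L) (p : P) :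
    (incGraph P L).dist (.inr l) (.inl p) = 1 ↔ p ∈ l :=
  SimpleGraph.dist_eq_one_iff_adj

instance ProjectivePlane.nonempty_lines [ProjectivePlane P L] : Nonempty L :=
  let ⟨_, _, _, l, _⟩ := ProjectivePlane.exists_config (P := P) (L := L)
  ⟨l⟩

namespace IsDoubleBlocking

variable {B : Set P}

theorem exists_mem_ne (hB : IsDoubleBlocking P L B) (l : L) (x : P) :
    ∃ q ∈ B, q ∈ l ∧ q ≠ x := by
  obtain ⟨q, ⟨hqB, hql⟩, hqx⟩ := Set.exists_ne_of_one_lt_ncard (one_lt_two.trans_le (hB l)) x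
  exact ⟨q, hqB, hql, hqx⟩

theorem nonempty [Nonempty L] (hB : IsDoubleBlocking P L B) : B.Nonempty :=
  let ⟨q, hqB, _⟩ := Set.nonempty_of_ncard_ne_zero (two_pos.trans_le (hB (Classical.arbitrary L))).ne'
  ⟨q, hqB⟩

/- Distance `1` detects incidence, so `l` and `m` contain the same points of `B \ {P₀}`; of
the two further points of `B` on `l` and on `m` (besides a common one `q`), one is off `P₀` and
hence common, unless both are `P₀`. -/
theorem isSemiResolvingSet_diff_singleton [Nondegenerate P L] (hB : IsDoubleBlocking P L B)
    (P₀ : P) : IsSemiResolvingSet P L (B \ {P₀}) := by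
  intro l m hdist
  have agree : ∀ p ∈ B, p ≠ P₀ → (p ∈ l ↔ p ∈ m) := fun p hpB hpP₀ => by
    rw [← incGraph_dist_eq_one_iff, ← incGraph_dist_eq_one_iff, hdist p ⟨hpB, hpP₀⟩]
  obtain ⟨q, hqB, hql, hqP₀⟩ := hB.exists_mem_ne l P₀
  have hqm : q ∈ m := (agree q hqB hqP₀).1 hql
  obtain ⟨r, hrB, hrl, hrq⟩ := hB.exists_mem_ne l q
  obtain ⟨s, hsB, hsm, hsq⟩ := hB.exists_mem_ne m q
  have second_common : ∃ c ≠ q, c ∈ l ∧ c ∈ m := by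
    by_cases hrP₀ : r = P₀
    · by_cases hsP₀ : s = P₀
      · exact ⟨r, hrq, hrl, hrP₀ ▸ hsP₀ ▸ hsm⟩
      · exact ⟨s, hsq, (agree s hsB hsP₀).2 hsm, hsm⟩
    · exact ⟨r, hrq, hrl, (agree r hrB hrP₀).1 hrl⟩
  obtain ⟨c, hcq, hcl, hcm⟩ := second_common
  exact (Nondegenerate.eq_or_eq hql hcl hqm hcm).resolve_left hcq.symm

end IsDoubleBlocking

theorem exists_card_eq_tau2 [Finite P] {B : Set P} (hB : IsDoubleBlocking P L B) :
    ∃ B₂ : Finset P, B₂.card = tau2 P L ∧ IsDoubleBlocking P L B₂ :=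
  Nat.sInf_mem (s := {n | ∃ B : Finset P, B.card = n ∧ IsDoubleBlocking P L ↑B})
    ⟨_, B.toFinite.toFinset, rfl, by rwa [Set.Finite.coe_toFinset]⟩

theorem muS_le_card_sub_one [Nondegenerate P L] [Nonempty L] {B : Finset P}
    (hB : IsDoubleBlocking P L B) : muS P L ≤ B.card - 1 := by
  classical
  obtain ⟨x, hx⟩ := hB.nonempty
  refine Finset.card_erase_of_mem hx ▸ Nat.sInf_le ⟨B.erase x, rfl, ?_⟩
  simpa only [Finset.coe_erase] using hB.isSemiResolvingSet_diff_singleton x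

theorem semiResolving_of_doubleBlocking_erase_general
    {P L : Type*} [Membership P L] [ProjectivePlane P L] [Finite P]
    (B : Set P) (hB : IsDoubleBlocking P L B) (P₀ : P) :
    IsSemiResolvingSet P L (B \ {P₀}) ∧ muS P L ≤ tau2 P L - 1 := by
  obtain ⟨B₂, hcard, hB₂⟩ := exists_card_eq_tau2 hB
  exact ⟨hB.isSemiResolvingSet_diff_singleton P₀, hcard ▸ muS_le_card_sub_one hB₂⟩

/-- removing a point from a double blocking set gives a semi-resolving set;
hence μ_S ≤ τ₂ - 1. -/
theorem semiResolving_of_doubleBlocking_erase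
    {P L : Type*} [Membership P L] [ProjectivePlane P L] [Finite P] [Finite L]
    (B : Set P) (hB : IsDoubleBlocking P L B) (P₀ : P) (hP₀ : P₀ ∈ B) :
    IsSemiResolvingSet P L (B \ {P₀}) ∧ muS P L ≤ tau2 P L - 1 :=
  semiResolving_of_doubleBlocking_erase_general B hB P₀
end

section
/- If a projective plane has a double blocking set B of minimum size τ₂ that is a disjoint union of two blocking sets B₁ and B₂, then removing one point from each of B₁ and B₂ yields a semi-resolving set; hence μ_S(Π) ≤ τ₂(Π) − 2. -/
open Configuration

variable (P L : Type*) [Membership P L]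

/-!
A line is determined by its trace on `S = (B₁ ∪ B₂) \ {P₁, P₂}`. If two lines with the same
trace share a point `q ∈ S`, say `q ∈ B₁`, then `q ∉ B₂`; each of the two lines meets `B₂` in a
point of `S` (common to both lines, hence a second common point) or in `P₂ ≠ q`, and in every
case they share two points. If both lines miss `S`, each meets `B₁` only in `P₁` and `B₂` only
in `P₂`, so both are the line `P₁P₂`. In the incidence graph a point is at distance `1` from a
line exactly when it lies on it, so equal distance lists give equal traces.
-/

def IsBlocking (B : Set P) : Prop :=
  ∀ l : L, ∃ p ∈ B, p ∈ l

variable {P L}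

theorem IsBlocking.mem_of_forall_not_mem {S B : Set P} {x : P}
    (hB : IsBlocking P L B) (hS : B \ {x} ⊆ S) {l : L} (hl : ∀ p ∈ S, p ∉ l) :
    x ∈ l := by
  obtain ⟨p, hpB, hpl⟩ := hB l
  by_contra hxl
  exact hl p (hS ⟨hpB, fun hpx => hxl (hpx ▸ hpl)⟩) hpl

section Traces

variable [Nondegenerate P L]

theorem Configuration.Nondegenerate.eq_of_two_common_points {p q : P} {l m : L} (hpq : p ≠ q)
    (hpl : p ∈ l) (hql : q ∈ l) (hpm : p ∈ m) (hqm : q ∈ m) : l = m :=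
  (Nondegenerate.eq_or_eq hpl hql hpm hqm).resolve_left hpq

theorem IsBlocking.eq_of_mem_iff_of_common_point {S B : Set P} {x : P}
    (hB : IsBlocking P L B) (hS : B \ {x} ⊆ S) {l m : L}
    (htr : ∀ p ∈ S, p ∈ l ↔ p ∈ m) {q : P} (hqB : q ∉ B) (hqx : q ≠ x)
    (hql : q ∈ l) (hqm : q ∈ m) : l = m := by
  have hne : ∀ {p}, p ∈ B → q ≠ p := fun hpB hqp => hqB (hqp ▸ hpB)
  obtain ⟨p, hpB, hpl⟩ := hB l
  by_cases hpx : p = x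
  · obtain ⟨p', hp'B, hp'm⟩ := hB m
    by_cases hp'x : p' = x
    · subst hpx hp'x
      exact Nondegenerate.eq_of_two_common_points hqx hql hpl hqm hp'm
    · have hp'l := (htr p' (hS ⟨hp'B, hp'x⟩)).mpr hp'm
      exact Nondegenerate.eq_of_two_common_points (hne hp'B) hql hp'l hqm hp'm
  · have hpm := (htr p (hS ⟨hpB, hpx⟩)).mp hpl
    exact Nondegenerate.eq_of_two_common_points (hne hpB) hql hpl hqm hpm

theorem eq_of_mem_iff_on_diff_pair_of_disjoint_blocking {B₁ B₂ : Set P} (hdisj : Disjoint B₁ B₂)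
    (hB₁ : IsBlocking P L B₁) (hB₂ : IsBlocking P L B₂)
    {P₁ P₂ : P} (hP₁ : P₁ ∈ B₁) (hP₂ : P₂ ∈ B₂) {l m : L}
    (htr : ∀ p ∈ (B₁ ∪ B₂) \ {P₁, P₂}, p ∈ l ↔ p ∈ m) : l = m := by
  set S := (B₁ ∪ B₂) \ {P₁, P₂}
  have hS₁ : B₁ \ {P₁} ⊆ S := fun p ⟨hp, hpP₁⟩ =>
    ⟨.inl hp, by rintro (h | h); exacts [hpP₁ h, hdisj.ne_of_mem hp hP₂ h]⟩
  have hS₂ : B₂ \ {P₂} ⊆ S := fun p ⟨hp, hpP₂⟩ =>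
    ⟨.inr hp, by rintro (h | h); exacts [hdisj.ne_of_mem hP₁ hp h.symm, hpP₂ h]⟩
  by_cases hmeet : ∃ q ∈ S, q ∈ l
  · obtain ⟨q, ⟨hqB | hqB, hqP⟩, hql⟩ := hmeet
    · exact hB₂.eq_of_mem_iff_of_common_point hS₂ htr (hdisj.notMem_of_mem_left hqB)
        (fun h => hqP (.inr h)) hql ((htr q ⟨.inl hqB, hqP⟩).mp hql)
    · exact hB₁.eq_of_mem_iff_of_common_point hS₁ htr (hdisj.notMem_of_mem_right hqB)
        (fun h => hqP (.inl h)) hql ((htr q ⟨.inr hqB, hqP⟩).mp hql)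
  · push Not at hmeet
    have hmeet' : ∀ p ∈ S, p ∉ m := fun p hp hpm => hmeet p hp ((htr p hp).mpr hpm)
    exact Nondegenerate.eq_of_two_common_points (hdisj.ne_of_mem hP₁ hP₂)
      (hB₁.mem_of_forall_not_mem hS₁ hmeet)
      (hB₂.mem_of_forall_not_mem hS₂ hmeet)
      (hB₁.mem_of_forall_not_mem hS₁ hmeet')
      (hB₂.mem_of_forall_not_mem hS₂ hmeet')

end Traces

theorem incGraph_dist_inr_inl_eq_one_iff {l : L} {p : P} :
    (incGraph P L).dist (.inr l) (.inl p) = 1 ↔ p ∈ l :=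
  SimpleGraph.dist_eq_one_iff_adj

theorem isSemiResolvingSet_of_forall_mem_iff {S : Set P}
    (h : ∀ l m : L, (∀ p ∈ S, p ∈ l ↔ p ∈ m) → l = m) : IsSemiResolvingSet P L S :=
  fun l m hd => h l m fun p hp => by
    rw [← incGraph_dist_inr_inl_eq_one_iff, ← incGraph_dist_inr_inl_eq_one_iff, hd p hp]

theorem muS_le_ncard [Finite P] {S : Set P} (hS : IsSemiResolvingSet P L S) :
    muS P L ≤ S.ncard := by
  have hfin := S.toFinite
  refine Nat.sInf_le ⟨hfin.toFinset, (Set.ncard_eq_toFinset_card S hfin).symm, ?_⟩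
  rwa [Set.Finite.coe_toFinset]

theorem semiResolving_of_two_disjoint_blocking_general
    {P L : Type*} [Membership P L] [ProjectivePlane P L] [Finite P]
    (B₁ B₂ : Set P) (hdisj : Disjoint B₁ B₂)
    (hB₁ : ∀ l : L, ∃ p ∈ B₁, p ∈ l) (hB₂ : ∀ l : L, ∃ p ∈ B₂, p ∈ l)
    (hmin : (B₁ ∪ B₂).ncard = tau2 P L)
    (P₁ : P) (hP₁ : P₁ ∈ B₁) (P₂ : P) (hP₂ : P₂ ∈ B₂) :
    IsSemiResolvingSet P L ((B₁ ∪ B₂) \ {P₁, P₂}) ∧ muS P L ≤ tau2 P L - 2 := by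
  have hsemi : IsSemiResolvingSet P L ((B₁ ∪ B₂) \ {P₁, P₂}) :=
    isSemiResolvingSet_of_forall_mem_iff fun _ _ =>
      eq_of_mem_iff_on_diff_pair_of_disjoint_blocking hdisj hB₁ hB₂ hP₁ hP₂
  have hpair : ({P₁, P₂} : Set P) ⊆ B₁ ∪ B₂ :=
    Set.insert_subset (.inl hP₁) (Set.singleton_subset_iff.mpr (.inr hP₂))
  have hcard : ((B₁ ∪ B₂) \ {P₁, P₂}).ncard = tau2 P L - 2 := by
    rw [Set.ncard_sdiff hpair, Set.ncard_pair (hdisj.ne_of_mem hP₁ hP₂), hmin]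
  exact ⟨hsemi, hcard ▸ muS_le_ncard hsemi⟩

/-- if a minimum double blocking set is the disjoint union of two blocking
sets, then removing one point from each part gives a semi-resolving set; hence
μ_S ≤ τ₂ - 2. -/
theorem semiResolving_of_two_disjoint_blocking
    {P L : Type*} [Membership P L] [ProjectivePlane P L] [Finite P] [Finite L]
    (B₁ B₂ : Set P) (hdisj : Disjoint B₁ B₂)
    (hB₁ : ∀ l : L, ∃ p ∈ B₁, p ∈ l) (hB₂ : ∀ l : L, ∃ p ∈ B₂, p ∈ l)
    (hmin : (B₁ ∪ B₂).ncard = tau2 P L)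
    (P₁ : P) (hP₁ : P₁ ∈ B₁) (P₂ : P) (hP₂ : P₂ ∈ B₂) :
    IsSemiResolvingSet P L ((B₁ ∪ B₂) \ {P₁, P₂}) ∧ muS P L ≤ tau2 P L - 2 :=
  semiResolving_of_two_disjoint_blocking_general B₁ B₂ hdisj hB₁ hB₂ hmin P₁ hP₁ P₂ hP₂
end
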